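/- arXiv:2206.05660 — 3 statements merged into one kernel-verified Lean document; each statement's English description precedes it below -/
import Mathlib

section
/- Let i, k ≥ 3 with r = ⌊(F_i − 1)/F_k⌋ ≥ 2 (equivalently k ≤ i − 2). Then g_2(F_i, F_{i+2}, F_{i+k}) = (F_i − r·F_k − 1)·F_{i+2} + (r+2)·F_{i+k} − F_i if (F_i − r·F_k)·F_{i+2} ≥ F_{k−2}·F_i, and g_2(F_i, F_{i+2}, F_{i+k}) = (F_k − 1)·F_{i+2} + (r+1)·F_{i+k} − F_i otherwise. -/
/-- Number of representations of `n` as a nonnegative integer combination of `a`, `b`, `c`. -/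
noncomputable def repCount (a b c : ℕ) (n : ℤ) : ℕ :=
  Nat.card {v : ℕ × ℕ × ℕ // (v.1 : ℤ) * a + v.2.1 * b + v.2.2 * c = n}

/-- `g` is the `p`-Frobenius number of `a, b, c`: the largest integer with at most `p`
representations. -/
def IsPFrob (p a b c : ℕ) (g : ℤ) : Prop :=
  IsGreatest {n : ℤ | repCount a b c n ≤ p} g

/-- Lucas numbers. -/
def lucas : ℕ → ℕ
  | 0 => 2
  | 1 => 1
  | n + 2 => lucas n + lucas (n + 1)

lemma repCount_eq (A B C : ℕ) (n : ℤ) :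
    repCount A B C n = {v : ℕ × ℕ × ℕ | (v.1 : ℤ) * A + v.2.1 * B + v.2.2 * C = n}.ncard := rfl

lemma reps_finite (A B C : ℕ) (hA : 0 < A) (hB : 0 < B) (hC : 0 < C) (n : ℤ) :
    {v : ℕ × ℕ × ℕ | (v.1 : ℤ) * A + v.2.1 * B + v.2.2 * C = n}.Finite := by
  apply (Set.finite_Iic ((n.toNat, n.toNat, n.toNat) : ℕ × ℕ × ℕ)).subset
  rintro ⟨x, y, z⟩ h
  simp only [Set.mem_setOf_eq] at h
  have hA1 : (1:ℤ) ≤ (A:ℤ) := by exact_mod_cast hA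
  have hB1 : (1:ℤ) ≤ (B:ℤ) := by exact_mod_cast hB
  have hC1 : (1:ℤ) ≤ (C:ℤ) := by exact_mod_cast hC
  have h0x : (0:ℤ) ≤ (x:ℤ) := Int.natCast_nonneg x
  have h0y : (0:ℤ) ≤ (y:ℤ) := Int.natCast_nonneg y
  have h0z : (0:ℤ) ≤ (z:ℤ) := Int.natCast_nonneg z
  have hx : (x:ℤ) ≤ n := by nlinarith
  have hy : (y:ℤ) ≤ n := by nlinarith
  have hz : (z:ℤ) ≤ n := by nlinarith
  simp only [Set.mem_Iic, Prod.mk_le_mk]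
  omega

lemma repCount_le_two (A B C : ℕ) (n : ℤ) (w₀ w₁ : ℕ × ℕ × ℕ)
    (h : ∀ v : ℕ × ℕ × ℕ, (v.1 : ℤ) * A + v.2.1 * B + v.2.2 * C = n → v = w₀ ∨ v = w₁) :
    repCount A B C n ≤ 2 := by
  rw [repCount_eq]
  calc {v : ℕ × ℕ × ℕ | (v.1 : ℤ) * A + v.2.1 * B + v.2.2 * C = n}.ncard
      ≤ ({w₀, w₁} : Set (ℕ × ℕ × ℕ)).ncard := by
        apply Set.ncard_le_ncard
        · intro v hv
          rcases h v hv with rfl | rfl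
          · exact Set.mem_insert _ _
          · exact Set.mem_insert_of_mem _ rfl
        · exact (Set.finite_singleton w₁).insert w₀
    _ ≤ 2 := by
        calc ({w₀, w₁} : Set (ℕ × ℕ × ℕ)).ncard ≤ ({w₁} : Set (ℕ × ℕ × ℕ)).ncard + 1 :=
              Set.ncard_insert_le _ _
          _ ≤ 2 := by rw [Set.ncard_singleton]

lemma three_le_repCount (A B C : ℕ) (hA : 0 < A) (hB : 0 < B) (hC : 0 < C) (n : ℤ)
    (v₀ v₁ v₂ : ℕ × ℕ × ℕ)
    (h₀ : (v₀.1 : ℤ) * A + v₀.2.1 * B + v₀.2.2 * C = n)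
    (h₁ : (v₁.1 : ℤ) * A + v₁.2.1 * B + v₁.2.2 * C = n)
    (h₂ : (v₂.1 : ℤ) * A + v₂.2.1 * B + v₂.2.2 * C = n)
    (d01 : v₀ ≠ v₁) (d02 : v₀ ≠ v₂) (d12 : v₁ ≠ v₂) :
    3 ≤ repCount A B C n := by
  rw [repCount_eq]
  have hsub : ({v₀, v₁, v₂} : Set (ℕ × ℕ × ℕ)) ⊆
      {v : ℕ × ℕ × ℕ | (v.1 : ℤ) * A + v.2.1 * B + v.2.2 * C = n} := by
    rintro v (rfl | rfl | rfl) <;> assumption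
  have h3 : ({v₀, v₁, v₂} : Set (ℕ × ℕ × ℕ)).ncard = 3 := by
    rw [Set.ncard_insert_of_notMem (by simp [d01, d02]),
      Set.ncard_insert_of_notMem (by simp [d12]), Set.ncard_singleton]
  rw [← h3]
  exact Set.ncard_le_ncard hsub (reps_finite A B C hA hB hC n)

lemma mk_rep (A B C : ℕ) (hA : 0 < (A:ℤ)) (n y z : ℤ) (hy : 0 ≤ y) (hz : 0 ≤ z)
    (hdvd : (A:ℤ) ∣ n - (y * B + z * C)) (hle : y * B + z * C ≤ n + ((A:ℤ) - 1)) :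
    ∃ x : ℕ, (x : ℤ) * A + (y.toNat : ℤ) * B + (z.toNat : ℤ) * C = n := by
  obtain ⟨t, ht⟩ := hdvd
  have ht0 : 0 ≤ t := by
    by_contra h
    push_neg at h
    have : t ≤ -1 := by omega
    nlinarith
  refine ⟨t.toNat, ?_⟩
  rw [Int.toNat_of_nonneg ht0, Int.toNat_of_nonneg hy, Int.toNat_of_nonneg hz]
  linarith

private lemma bnd1 (a b K D r s q : ℤ) (hb0 : 0 < b) (hD0 : 0 ≤ D) (hE1 : 4*D ≤ K*b)
    (hs : s ≤ K*q + K - 1) (hqr : q ≤ r) (hrK : r*K ≤ a - 1) :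
    s*b - (q-2)*D ≤ (a + 2*K - 1)*b - (r+2)*D := by
  have h1 : (r-q+1)*K + 1 ≤ a + 2*K - 1 - s := by linarith
  have h2 : (r - q + 4)*D ≤ ((r-q+1)*K + 1)*b := by
    nlinarith [mul_nonneg (by linarith : (0:ℤ) ≤ r - q) (by linarith : (0:ℤ) ≤ K*b - D)]
  have h3 : ((r-q+1)*K + 1)*b ≤ (a + 2*K - 1 - s)*b :=
    mul_le_mul_of_nonneg_right h1 (le_of_lt hb0)
  nlinarith [h2.trans h3]

private lemma bnd2 (b K D r s : ℤ) (hb0 : 0 < b) (hD0 : 0 ≤ D) (hE1 : 4*D ≤ K*b)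
    (hs : s ≤ 2*K - 1) (hr2 : 2 ≤ r) :
    s*b ≤ ((r+2)*K - 1)*b - (r+1)*D := by
  nlinarith [mul_nonneg (by linarith : (0:ℤ) ≤ 2*K - 1 - s) (le_of_lt hb0),
    mul_nonneg (by linarith : (0:ℤ) ≤ r + 1) (by linarith : (0:ℤ) ≤ K*b - 4*D),
    mul_nonneg (by linarith : (0:ℤ) ≤ 3*r - 1) (by nlinarith : (0:ℤ) ≤ K*b)]

private lemma bnd3 (a b K D r s z : ℤ) (hb0 : 0 < b) (hD0 : 0 ≤ D)
    (hs : s ≤ 2*K - 1) (hz : r + 2 ≤ z) :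
    (s+a)*b - z*D ≤ (a + 2*K - 1)*b - (r+2)*D := by
  nlinarith [mul_nonneg (by linarith : (0:ℤ) ≤ z - (r+2)) hD0,
    mul_nonneg (by linarith : (0:ℤ) ≤ 2*K - 1 - s) (le_of_lt hb0)]

private lemma bnd4 (b K D r s a : ℤ) (hb0 : 0 < b)
    (hsa : s + a ≤ (r+2)*K - 1) :
    (s+a)*b - (r+1)*D ≤ ((r+2)*K - 1)*b - (r+1)*D := by
  have := mul_le_mul_of_nonneg_right hsa (le_of_lt hb0)
  linarith

private lemma bnd5 (a b K D r s : ℤ) (hb0 : 0 < b) (hD0 : 0 ≤ D) (hE1 : 4*D ≤ K*b)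
    (hs : s ≤ K - 1) (hrK : r*K ≤ a - 1) (hr2 : 2 ≤ r) :
    s*b ≤ (a + 2*K - 1)*b - (r+2)*D := by
  nlinarith [mul_nonneg (by linarith : (0:ℤ) ≤ a + 2*K - 1 - s - (r*K + K)) (le_of_lt hb0),
    mul_nonneg (by linarith : (0:ℤ) ≤ r + 2) (by linarith : (0:ℤ) ≤ K*b - 4*D),
    mul_nonneg (by linarith : (0:ℤ) ≤ 3*r + 2) (by nlinarith : (0:ℤ) ≤ K*b)]

private lemma bnd6 (a b K D r s : ℤ) (hb0 : 0 < b) (hD0 : 0 ≤ D) (hE1 : 4*D ≤ K*b)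
    (hs : s ≤ K - 1) :
    (s+a)*b - r*D ≤ (a + 2*K - 1)*b - (r+2)*D := by
  nlinarith [mul_nonneg (by linarith : (0:ℤ) ≤ K - 1 - s) (le_of_lt hb0)]

private lemma bnd7 (a b K D r s : ℤ) (hb0 : 0 < b) (hD0 : 0 ≤ D) (hE1 : 4*D ≤ K*b)
    (hsa : s + a ≤ (r+1)*K - 1) (hrK : r*K ≤ a - 1) :
    (s+a)*b - (r-1)*D ≤ (a + 2*K - 1)*b - (r+2)*D := by
  nlinarith [mul_nonneg (by linarith : (0:ℤ) ≤ (r+1)*K - 1 - (s+a)) (le_of_lt hb0),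
    mul_nonneg (by linarith : (0:ℤ) ≤ a - (r-1)*K - (K+1)) (le_of_lt hb0)]

lemma three_pairs (a b K d r : ℤ)
    (hA : 0 < a) (hK : 0 < K) (hd : 0 < d)
    (hb2 : 2 * a ≤ b)
    (hrK : r * K ≤ a - 1)
    (hrK2 : a - 1 < (r + 1) * K)
    (hr2 : 2 ≤ r)
    (hdK : 2 * d ≤ K)
    (s : ℤ) (hs0 : 0 ≤ s) (hs1 : s < a) :
    ∃ y₀ z₀ y₁ z₁ y₂ z₂ : ℤ,
      (0 ≤ y₀ ∧ 0 ≤ z₀ ∧ a ∣ (y₀ + z₀ * K - s) ∧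
        (y₀ + z₀ * K) * b - z₀ * (d * a) ≤ max ((a + 2*K - 1)*b - (r+2)*(d*a)) (((r+2)*K - 1)*b - (r+1)*(d*a))) ∧
      (0 ≤ y₁ ∧ 0 ≤ z₁ ∧ a ∣ (y₁ + z₁ * K - s) ∧
        (y₁ + z₁ * K) * b - z₁ * (d * a) ≤ max ((a + 2*K - 1)*b - (r+2)*(d*a)) (((r+2)*K - 1)*b - (r+1)*(d*a))) ∧
      (0 ≤ y₂ ∧ 0 ≤ z₂ ∧ a ∣ (y₂ + z₂ * K - s) ∧
        (y₂ + z₂ * K) * b - z₂ * (d * a) ≤ max ((a + 2*K - 1)*b - (r+2)*(d*a)) (((r+2)*K - 1)*b - (r+1)*(d*a))) ∧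
      z₀ ≠ z₁ ∧ z₀ ≠ z₂ ∧ z₁ ≠ z₂ := by
  have hb0 : 0 < b := by linarith
  have hE1 : 4 * (d * a) ≤ K * b := by nlinarith
  have hD0 : (0:ℤ) ≤ d * a := le_of_lt (mul_pos hd hA)
  set D : ℤ := d * a with hD
  set G₁ : ℤ := (a + 2*K - 1)*b - (r+2)*D with hG₁
  set G₂ : ℤ := ((r+2)*K - 1)*b - (r+1)*D with hG₂
  set q : ℤ := s / K with hq
  set u : ℤ := s % K with hu
  have hqu : K * q + u = s := Int.mul_ediv_add_emod s K
  have hu0 : 0 ≤ u := Int.emod_nonneg s (ne_of_gt hK)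
  have hu1 : u < K := Int.emod_lt_of_pos s hK
  have hq0 : 0 ≤ q := Int.ediv_nonneg hs0 (le_of_lt hK)
  have hqr : q ≤ r := by
    by_contra h
    push_neg at h
    have h2 : K * (r + 1) ≤ K * q := mul_le_mul_of_nonneg_left (by omega) (le_of_lt hK)
    nlinarith
  -- the pair coming from s + a (used in cases q = 0, 1)
  set z' : ℤ := (s + a) / K with hz'
  set y' : ℤ := (s + a) % K with hy'
  have hz'u : K * z' + y' = s + a := Int.mul_ediv_add_emod (s + a) K
  have hy'0 : 0 ≤ y' := Int.emod_nonneg (s + a) (ne_of_gt hK)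
  have hy'1 : y' < K := Int.emod_lt_of_pos (s + a) hK
  have hz'r : r ≤ z' := by
    by_contra h
    push_neg at h
    have h2 : K * (z' + 1) ≤ K * r := mul_le_mul_of_nonneg_left (by omega) (le_of_lt hK)
    nlinarith
  rcases le_or_gt 2 q with hq2 | hq2
  · -- case q ≥ 2 : pairs (u, q), (u + K, q - 1), (u + 2K, q - 2)
    have hsb : s ≤ K*q + K - 1 := by omega
    have hmain : s * b - (q-2)*D ≤ G₁ :=
      bnd1 a b K D r s q hb0 hD0 hE1 hsb hqr hrK
    refine ⟨u, q, u + K, q - 1, u + 2*K, q - 2, ?_, ?_, ?_, by omega, by omega, by omega⟩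
    · refine ⟨hu0, by omega, ⟨0, by linarith⟩, le_max_of_le_left ?_⟩
      have h1 : (u + q * K) * b - q * D = s * b - q * D := by
        have : u + q * K = s := by linarith
        rw [this]
      rw [h1]; linarith
    · refine ⟨by omega, by omega, ⟨0, by linarith⟩, le_max_of_le_left ?_⟩
      have h1 : (u + K + (q - 1) * K) * b - (q-1) * D = s * b - (q-1) * D := by
        have : u + K + (q - 1) * K = s := by linarith
        rw [this]
      rw [h1]; linarith
    · refine ⟨by omega, by omega, ⟨0, by linarith⟩, le_max_of_le_left ?_⟩
      have h1 : (u + 2*K + (q - 2) * K) * b - (q-2) * D = s * b - (q-2) * D := by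
        have : u + 2*K + (q - 2) * K = s := by linarith
        rw [this]
      rw [h1]; linarith
  · rcases le_or_gt 1 q with hq1 | hq1
    · -- case q = 1 : pairs (u, 1), (s, 0), (y', z')
      have hq1' : q = 1 := by omega
      have hKu : K + u = s := by
        have := hqu; rw [hq1'] at this; linarith
      have hsK : K ≤ s := by linarith
      have hs2K : s ≤ 2*K - 1 := by linarith
      have hz'3 : r + 1 ≤ z' := by
        by_contra h
        push_neg at h
        have h2 : K * (z' + 1) ≤ K * (r + 1) := mul_le_mul_of_nonneg_left (by omega) (le_of_lt hK)
        nlinarith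
      refine ⟨u, 1, s, 0, y', z', ?_, ?_, ?_, by omega, by omega, by omega⟩
      · refine ⟨hu0, by omega, ⟨0, by linarith [hKu]⟩, le_max_of_le_right ?_⟩
        have h1 : (u + 1 * K) * b - 1 * D = s * b - D := by
          have : u + 1 * K = s := by linarith
          rw [this]; ring
        rw [h1]
        have := bnd2 b K D r s hb0 hD0 hE1 hs2K hr2
        rw [hG₂]; linarith
      · refine ⟨hs0, le_refl 0, ⟨0, by ring⟩, le_max_of_le_right ?_⟩
        have h1 : (s + 0 * K) * b - 0 * D = s * b := by ring
        rw [h1, hG₂]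
        exact bnd2 b K D r s hb0 hD0 hE1 hs2K hr2
      · refine ⟨hy'0, by omega, ⟨1, by linarith⟩, ?_⟩
        have hval : (y' + z' * K) * b - z' * D = (s + a) * b - z' * D := by
          have : y' + z' * K = s + a := by linarith
          rw [this]
        rw [hval]
        rcases le_or_gt (r + 2) z' with hz'' | hz''
        · exact le_max_of_le_left (by rw [hG₁]; exact bnd3 a b K D r s z' hb0 hD0 hs2K hz'')
        · apply le_max_of_le_right
          have hz'e : z' = r + 1 := by omega
          have h2 : K * z' = K * (r + 1) := by rw [hz'e]
          have hsa : s + a ≤ (r + 2) * K - 1 := by linarith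
          rw [hG₂, hz'e]
          exact bnd4 b K D r s a hb0 hsa
    · -- case q = 0 : pairs (s, 0), (y', z'), (y' + K, z' - 1)
      have hq0' : q = 0 := by omega
      have hsu : u = s := by
        have := hqu; rw [hq0'] at this; linarith
      have hsK : s ≤ K - 1 := by linarith
      have hz'r2 : z' ≤ r + 1 := by
        by_contra h
        push_neg at h
        have h2 : K * (r + 2) ≤ K * z' := mul_le_mul_of_nonneg_left (by omega) (le_of_lt hK)
        nlinarith
      refine ⟨s, 0, y', z', y' + K, z' - 1, ?_, ?_, ?_, by omega, by omega, by omega⟩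
      · refine ⟨hs0, le_refl 0, ⟨0, by ring⟩, le_max_of_le_left ?_⟩
        have h1 : (s + 0 * K) * b - 0 * D = s * b := by ring
        rw [h1, hG₁]
        exact bnd5 a b K D r s hb0 hD0 hE1 hsK hrK hr2
      · refine ⟨hy'0, by omega, ⟨1, by linarith⟩, le_max_of_le_left ?_⟩
        have hval : (y' + z' * K) * b - z' * D = (s + a) * b - z' * D := by
          have : y' + z' * K = s + a := by linarith
          rw [this]
        rw [hval, hG₁]
        rcases eq_or_lt_of_le hz'r2 with hz'e | hz''
        · rw [hz'e]
          have := bnd6 a b K D r s hb0 hD0 hE1 hsK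
          linarith
        · have hz'e : z' = r := by omega
          have h2 : K * z' = K * r := by rw [hz'e]
          have hsa : s + a ≤ (r + 1) * K - 1 := by linarith
          rw [hz'e]
          have := bnd7 a b K D r s hb0 hD0 hE1 hsa hrK
          linarith
      · refine ⟨by omega, by omega, ⟨1, by linarith⟩, le_max_of_le_left ?_⟩
        have hval : (y' + K + (z' - 1) * K) * b - (z' - 1) * D = (s + a) * b - (z' - 1) * D := by
          have : y' + K + (z' - 1) * K = s + a := by linarith
          rw [this]
        rw [hval, hG₁]
        rcases eq_or_lt_of_le hz'r2 with hz'e | hz'' 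
        · rw [hz'e]
          have := bnd6 a b K D r s hb0 hD0 hE1 hsK
          have h9 : (s+a)*b - (r+1-1)*D = (s+a)*b - r*D := by ring_nf
          linarith [hE1]
        · have hz'e : z' = r := by omega
          have h2 : K * z' = K * r := by rw [hz'e]
          have hsa : s + a ≤ (r + 1) * K - 1 := by linarith
          rw [hz'e]
          exact bnd7 a b K D r s hb0 hD0 hE1 hsa hrK

private lemma bndA (a b K d z zs m : ℤ) (hA : 0 < a) (hK : 0 < K) (hd : 0 < d)
    (hb2 : 2*a ≤ b) (hdK : 2*d ≤ K) (hKa : K + 1 ≤ a) (hm : 2 ≤ m)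
    (hw : (z - zs)*K ≤ (m-1)*a + K - 1) :
    (z - zs)*(d*a) ≤ (m-1)*(a*b) := by
  have hdK' : d ≤ K := by linarith
  have h3 : a*d + K*d ≤ b*K := by
    nlinarith [mul_nonneg (le_of_lt hA) (by linarith : (0:ℤ) ≤ K - d),
      mul_nonneg (le_of_lt hK) (by linarith : (0:ℤ) ≤ a - d),
      mul_nonneg (le_of_lt hK) (by linarith : (0:ℤ) ≤ b - 2*a)]
  have h2 : ((m-1)*a + K - 1)*d ≤ (m-1)*b*K := by
    nlinarith [mul_nonneg (by linarith : (0:ℤ) ≤ m - 2) (by nlinarith : (0:ℤ) ≤ b*K - a*d)]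
  have h1 : (z - zs)*K*d ≤ ((m-1)*a + K - 1)*d := mul_le_mul_of_nonneg_right hw (le_of_lt hd)
  have h4 : (z - zs)*d*K ≤ (m-1)*b*K := by nlinarith [h1.trans h2]
  have h5 : (z - zs)*d ≤ (m-1)*b := le_of_mul_le_mul_right (by linarith) hK
  nlinarith [mul_le_mul_of_nonneg_right h5 (le_of_lt hA)]

lemma partA (A B C : ℕ) (K d zs S : ℤ)
    (hA : 0 < (A:ℤ)) (hK : 0 < K) (hd : 0 < d)
    (hb2 : 2*(A:ℤ) ≤ (B:ℤ))
    (hdK : 2*d ≤ K)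
    (hKa : 2*K ≤ (A:ℤ) - 1)
    (hcb : (C:ℤ) = K*(B:ℤ) - d*(A:ℤ))
    (hcop : IsCoprime ((A:ℤ)) ((B:ℤ)))
    (hS1 : (A:ℤ) ≤ S) (hS2 : S ≤ (A:ℤ) + 2*K - 1)
    (hz1 : zs*K ≤ S) (hz2 : S ≤ zs*K + K - 1) (hzs0 : 0 ≤ zs) :
    repCount A B C (S*(B:ℤ) - zs*(d*(A:ℤ)) - A) ≤ 2 := by
  have hKa' : K + 1 ≤ (A:ℤ) := by linarith
  set g : ℤ := S*(B:ℤ) - zs*(d*(A:ℤ)) - A with hg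
  set s : ℤ := S - (A:ℤ) with hs
  apply repCount_le_two A B C g
    (((g - s*(B:ℤ))/(A:ℤ)).toNat, s.toNat, 0)
    (((g - (s - K)*(B:ℤ) - (C:ℤ))/(A:ℤ)).toNat, (s - K).toNat, 1)
  rintro ⟨x, y, z⟩ hv
  simp only at hv
  have hb0 : (0:ℤ) < (B:ℤ) := by linarith
  have hx0 : (0:ℤ) ≤ (x:ℤ) := Int.natCast_nonneg x
  have hy0 : (0:ℤ) ≤ (y:ℤ) := Int.natCast_nonneg y
  have hz0 : (0:ℤ) ≤ (z:ℤ) := Int.natCast_nonneg z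
  have hs0 : 0 ≤ s := by rw [hs]; linarith
  have hs2K : s ≤ 2*K - 1 := by rw [hs]; linarith
  have hdvd : (A:ℤ) ∣ ((y:ℤ) + z*K - s) := by
    apply hcop.dvd_of_dvd_mul_right
    refine ⟨(z:ℤ)*d - zs*d - 1 - x + B, ?_⟩
    rw [hg, hs] at *
    linear_combination hv - (z:ℤ)*hcb
  obtain ⟨m, hm⟩ := hdvd
  have hm0 : 0 ≤ m := by
    rcases le_or_gt 0 m with h | h
    · exact h
    · exfalso
      have h1 : m ≤ -1 := by omega
      have h2 : (A:ℤ)*m ≤ -A := by nlinarith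
      have h3 : (y:ℤ) + z*K - s ≤ -A := by linarith
      have hzK : 0 ≤ (z:ℤ)*K := mul_nonneg hz0 (le_of_lt hK)
      linarith
  rcases eq_or_lt_of_le hm0 with hm0' | hm1
  · -- m = 0 : y + zK = s
    have hyzs : (y:ℤ) + z*K = s := by
      have h9 := hm; rw [← hm0'] at h9; linarith
    have hzK : (z:ℤ)*K ≤ s := by linarith
    have hz2' : (z:ℤ) < 2 := by
      by_contra hcon
      push_neg at hcon
      have : 2*K ≤ (z:ℤ)*K := mul_le_mul_of_nonneg_right hcon (le_of_lt hK)
      linarith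
    have hzcases : z = 0 ∨ z = 1 := by
      have h9 : (z:ℤ) = 0 ∨ (z:ℤ) = 1 := by omega
      rcases h9 with h | h
      · left; exact_mod_cast h
      · right; exact_mod_cast h
    rcases hzcases with rfl | rfl
    · left
      have hy : (y:ℤ) = s := by push_cast at hyzs; linarith
      have hx : (x:ℤ)*(A:ℤ) = g - s*(B:ℤ) := by
        push_cast at hv
        linear_combination hv - (B:ℤ)*hy
      have hx' : (x:ℤ) = (g - s*(B:ℤ))/(A:ℤ) := by
        rw [← hx, Int.mul_ediv_cancel _ (ne_of_gt hA)]
      have hyn : y = s.toNat := by omega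
      have hxn : x = ((g - s*(B:ℤ))/(A:ℤ)).toNat := by omega
      simp [Prod.ext_iff, hxn, hyn]
    · right
      have hy : (y:ℤ) = s - K := by push_cast at hyzs; linarith
      have hx : (x:ℤ)*(A:ℤ) = g - (s - K)*(B:ℤ) - C := by
        push_cast at hv
        linear_combination hv - (B:ℤ)*hy
      have hx' : (x:ℤ) = (g - (s - K)*(B:ℤ) - C)/(A:ℤ) := by
        rw [← hx, Int.mul_ediv_cancel _ (ne_of_gt hA)]
      have hyn : y = (s - K).toNat := by omega
      have hxn : x = ((g - (s - K)*(B:ℤ) - C)/(A:ℤ)).toNat := by omega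
      simp [Prod.ext_iff, hxn, hyn]
  · -- m ≥ 1 : contradiction
    exfalso
    have hm1' : 1 ≤ m := hm1
    have hyz : (y:ℤ) + z*K = s + (A:ℤ)*m := by linarith
    have hV : (y:ℤ)*(B:ℤ) + z*(C:ℤ) = (s + (A:ℤ)*m)*(B:ℤ) - z*(d*(A:ℤ)) := by
      linear_combination (z:ℤ)*hcb + (B:ℤ)*hyz
    have hVg : (y:ℤ)*(B:ℤ) + z*(C:ℤ) ≤ g := by
      have h9 : (0:ℤ) ≤ (x:ℤ)*(A:ℤ) := mul_nonneg hx0 (le_of_lt hA)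
      linarith [hv]
    have key : ((z:ℤ) - zs)*(d*(A:ℤ)) ≤ (m-1)*((A:ℤ)*(B:ℤ)) := by
      rcases le_or_gt (z:ℤ) zs with hle | hgt
      · have h1 : ((z:ℤ) - zs)*(d*(A:ℤ)) ≤ 0 :=
          mul_nonpos_of_nonpos_of_nonneg (by linarith) (by positivity)
        have h2 : (0:ℤ) ≤ (m-1)*((A:ℤ)*(B:ℤ)) := mul_nonneg (by linarith) (by positivity)
        linarith
      · have hzKS : (z:ℤ)*K ≤ S + (m-1)*(A:ℤ) := by
          have := hyz; rw [hs] at this; linarith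
        rcases eq_or_lt_of_le hm1' with hm1e | hm2
        · exfalso
          have hz1' : zs + 1 ≤ (z:ℤ) := by linarith
          have h9 : (zs + 1)*K ≤ (z:ℤ)*K := mul_le_mul_of_nonneg_right hz1' (le_of_lt hK)
          have hme : m = 1 := hm1e.symm
          rw [hme] at hzKS
          linarith
        · apply bndA (A:ℤ) (B:ℤ) K d z zs m hA hK hd hb2 hdK hKa' (by omega)
          linarith [hzKS, hz2]
    have hbig : (s + (A:ℤ)*m)*(B:ℤ) - z*(d*(A:ℤ)) ≥ g + A := by
      rw [hg, hs]
      nlinarith [key]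
    rw [hV] at hVg
    linarith

section
variable (A B C : ℕ) (K d r : ℤ)

lemma partB (hA : 0 < (A:ℤ)) (hK : 0 < K) (hd : 0 < d)
    (hB : 0 < B) (hC : 0 < C)
    (hb2 : 2*(A:ℤ) ≤ (B:ℤ))
    (hrK : r * K ≤ (A:ℤ) - 1)
    (hrK2 : (A:ℤ) - 1 < (r + 1) * K)
    (hr2 : 2 ≤ r)
    (hdK : 2*d ≤ K)
    (hcb : (C:ℤ) = K*(B:ℤ) - d*(A:ℤ))
    (hcop : IsCoprime ((A:ℤ)) ((B:ℤ)))
    (n : ℤ)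
    (hn : max (((A:ℤ) + 2*K - 1)*(B:ℤ) - (r+2)*(d*(A:ℤ)) - A)
          (((r+2)*K - 1)*(B:ℤ) - (r+1)*(d*(A:ℤ)) - A) < n) :
    3 ≤ repCount A B C n := by
  obtain ⟨u, w, huw⟩ := hcop
  set s : ℤ := (n*w) % (A:ℤ) with hsdef
  have hs0 : 0 ≤ s := Int.emod_nonneg _ (ne_of_gt hA)
  have hs1 : s < (A:ℤ) := Int.emod_lt_of_pos _ hA
  have hdvd_s : (A:ℤ) ∣ n - s*(B:ℤ) := by
    refine ⟨n*u + (n*w/(A:ℤ))*(B:ℤ), ?_⟩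
    rw [hsdef, Int.emod_def]
    linear_combination (-n)*huw
  have hmax : max (((A:ℤ) + 2*K - 1)*(B:ℤ) - (r+2)*(d*(A:ℤ)))
      (((r+2)*K - 1)*(B:ℤ) - (r+1)*(d*(A:ℤ))) ≤ n + ((A:ℤ) - 1) := by
    have h1 : ((A:ℤ) + 2*K - 1)*(B:ℤ) - (r+2)*(d*(A:ℤ)) - A < n :=
      lt_of_le_of_lt (le_max_left _ _) hn
    have h2 : ((r+2)*K - 1)*(B:ℤ) - (r+1)*(d*(A:ℤ)) - A < n :=
      lt_of_le_of_lt (le_max_right _ _) hn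
    exact max_le (by linarith) (by linarith)
  obtain ⟨y₀, z₀, y₁, z₁, y₂, z₂, ⟨hy₀, hz₀, hd₀, hV₀⟩, ⟨hy₁, hz₁, hd₁, hV₁⟩,
    ⟨hy₂, hz₂, hd₂, hV₂⟩, h01, h02, h12⟩ :=
    three_pairs (A:ℤ) (B:ℤ) K d r hA hK hd hb2 hrK hrK2 hr2 hdK s hs0 hs1
  have mk : ∀ y z : ℤ, 0 ≤ y → 0 ≤ z → (A:ℤ) ∣ (y + z * K - s) →
      (y + z * K) * (B:ℤ) - z * (d * (A:ℤ)) ≤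
        max (((A:ℤ) + 2*K - 1)*(B:ℤ) - (r+2)*(d*(A:ℤ)))
          (((r+2)*K - 1)*(B:ℤ) - (r+1)*(d*(A:ℤ))) →
      ∃ x : ℕ, (x : ℤ) * A + (y.toNat : ℤ) * B + (z.toNat : ℤ) * C = n := by
    intro y z hy hz hdvd hV
    apply mk_rep A B C hA n y z hy hz
    · have e : n - (y*(B:ℤ) + z*(C:ℤ)) =
          (n - s*(B:ℤ)) - (y + z*K - s)*(B:ℤ) + (A:ℤ)*(z*d) := by
        linear_combination (-z)*hcb
      rw [e]
      exact dvd_add (dvd_sub hdvd_s (hdvd.mul_right _)) (Dvd.intro _ rfl)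
    · have e : y*(B:ℤ) + z*(C:ℤ) = (y + z*K)*(B:ℤ) - z*(d*(A:ℤ)) := by
        linear_combination z*hcb
      rw [e]
      exact hV.trans hmax
  obtain ⟨x₀, hx₀⟩ := mk y₀ z₀ hy₀ hz₀ hd₀ hV₀
  obtain ⟨x₁, hx₁⟩ := mk y₁ z₁ hy₁ hz₁ hd₁ hV₁
  obtain ⟨x₂, hx₂⟩ := mk y₂ z₂ hy₂ hz₂ hd₂ hV₂
  have hz01 : z₀.toNat ≠ z₁.toNat := by omega
  have hz02 : z₀.toNat ≠ z₂.toNat := by omega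
  have hz12 : z₁.toNat ≠ z₂.toNat := by omega
  exact three_le_repCount A B C (by exact_mod_cast hA) hB hC n
    (x₀, y₀.toNat, z₀.toNat) (x₁, y₁.toNat, z₁.toNat) (x₂, y₂.toNat, z₂.toNat)
    hx₀ hx₁ hx₂
    (fun h => hz01 (congrArg (fun p => p.2.2) h))
    (fun h => hz02 (congrArg (fun p => p.2.2) h))
    (fun h => hz12 (congrArg (fun p => p.2.2) h))

lemma core (hA : 0 < (A:ℤ)) (hK : 0 < K) (hd : 0 < d)
    (hB : 0 < B) (hC : 0 < C)
    (hb2 : 2*(A:ℤ) ≤ (B:ℤ))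
    (hrK : r * K ≤ (A:ℤ) - 1)
    (hrK2 : (A:ℤ) - 1 < (r + 1) * K)
    (hr2 : 2 ≤ r)
    (hdK : 2*d ≤ K)
    (hcb : (C:ℤ) = K*(B:ℤ) - d*(A:ℤ))
    (hcop : IsCoprime ((A:ℤ)) ((B:ℤ))) :
    IsPFrob 2 A B C (max (((A:ℤ) + 2*K - 1)*(B:ℤ) - (r+2)*(d*(A:ℤ)) - A)
          (((r+2)*K - 1)*(B:ℤ) - (r+1)*(d*(A:ℤ)) - A)) := by
  have hKa : 2*K ≤ (A:ℤ) - 1 := by nlinarith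
  constructor
  · show repCount A B C _ ≤ 2
    rcases le_total (((r+2)*K - 1)*(B:ℤ) - (r+1)*(d*(A:ℤ)) - A)
        (((A:ℤ) + 2*K - 1)*(B:ℤ) - (r+2)*(d*(A:ℤ)) - A) with h | h
    · rw [max_eq_left h]
      exact partA A B C K d (r+2) ((A:ℤ) + 2*K - 1) hA hK hd hb2 hdK hKa hcb hcop
        (by linarith) (by linarith) (by linarith) (by nlinarith) (by linarith)
    · rw [max_eq_right h]
      exact partA A B C K d (r+1) (((r:ℤ)+2)*K - 1) hA hK hd hb2 hdK hKa hcb hcop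
        (by nlinarith) (by nlinarith) (by linarith) (by linarith) (by linarith)
  · intro n hn
    by_contra hcon
    push_neg at hcon
    have h3 := partB A B C K d r hA hK hd hB hC hb2 hrK hrK2 hr2 hdK hcb hcop n hcon
    simp only [Set.mem_setOf_eq] at hn
    omega
end

theorem stmt11 (i k : ℕ) (hi : 3 ≤ i) (hk : 3 ≤ k)
    (hr : 2 ≤ (Nat.fib i - 1) / Nat.fib k) :
    letI F := Nat.fib
    letI r := (F i - 1) / F k
    IsPFrob 2 (F i) (F (i + 2)) (F (i + k))
      (if (F (k - 2) : ℤ) * F i ≤ ((F i : ℤ) - r * F k) * F (i + 2) then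
        ((F i : ℤ) - r * F k - 1) * F (i + 2) + ((r : ℤ) + 2) * F (i + k) - F i
      else
        ((F k : ℤ) - 1) * F (i + 2) + ((r : ℤ) + 1) * F (i + k) - F i) := by
  set R : ℕ := (Nat.fib i - 1) / Nat.fib k with hRdef
  -- basic Fibonacci positivity and identities
  have hA : 0 < (Nat.fib i : ℤ) := by
    exact_mod_cast Nat.fib_pos.mpr (by omega)
  have hB : 0 < Nat.fib (i + 2) := Nat.fib_pos.mpr (by omega)
  have hC : 0 < Nat.fib (i + k) := Nat.fib_pos.mpr (by omega)
  have hdN : 0 < Nat.fib (k - 2) := Nat.fib_pos.mpr (by omega)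
  have hKN : 0 < Nat.fib k := Nat.fib_pos.mpr (by omega)
  -- main identity : Nat.fib (i+k) + Nat.fib (k-2) * Nat.fib i = Nat.fib k * Nat.fib (i+2)
  have hcbN : Nat.fib (i + k) + Nat.fib (k - 2) * Nat.fib i = Nat.fib k * Nat.fib (i + 2) := by
    have h1 : Nat.fib (i + k) = Nat.fib (k - 1) * Nat.fib i + Nat.fib k * Nat.fib (i + 1) := by
      have h := Nat.fib_add (k - 2) i
      have e1 : k - 2 + i + 1 = i + (k - 1) := by omega
      rw [e1] at h
      have h' := Nat.fib_add (k - 1) i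
      have e2 : k - 1 + i + 1 = i + k := by omega
      have e3 : k - 1 + 1 = k := by omega
      rw [e2, e3] at h'
      exact h'
    have h2 : Nat.fib k = Nat.fib (k - 2) + Nat.fib (k - 1) := by
      have := Nat.fib_add_two (n := k - 2)
      have e : k - 2 + 2 = k := by omega
      have e2 : k - 2 + 1 = k - 1 := by omega
      rw [e, e2] at this
      exact this
    have h3 : Nat.fib (i + 2) = Nat.fib i + Nat.fib (i + 1) := Nat.fib_add_two
    rw [h1, h2, h3]
    ring
  have hcb : (Nat.fib (i + k) : ℤ) = (Nat.fib k : ℤ) * Nat.fib (i + 2) - (Nat.fib (k - 2) : ℤ) * Nat.fib i := by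
    have := congrArg (fun x : ℕ => (x : ℤ)) hcbN
    push_cast at this
    linarith
  have hb2 : 2 * (Nat.fib i : ℤ) ≤ (Nat.fib (i + 2) : ℤ) := by
    have h3 : Nat.fib (i + 2) = Nat.fib i + Nat.fib (i + 1) := Nat.fib_add_two
    have h4 : Nat.fib i ≤ Nat.fib (i + 1) := Nat.fib_le_fib_succ
    have : 2 * Nat.fib i ≤ Nat.fib (i + 2) := by omega
    exact_mod_cast this
  have hdK : 2 * (Nat.fib (k - 2) : ℤ) ≤ (Nat.fib k : ℤ) := by
    have h2 : Nat.fib k = Nat.fib (k - 2) + Nat.fib (k - 1) := by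
      have := Nat.fib_add_two (n := k - 2)
      have e : k - 2 + 2 = k := by omega
      have e2 : k - 2 + 1 = k - 1 := by omega
      rw [e, e2] at this
      exact this
    have h4 : Nat.fib (k - 2) ≤ Nat.fib (k - 1) := Nat.fib_mono (by omega)
    have : 2 * Nat.fib (k - 2) ≤ Nat.fib k := by omega
    exact_mod_cast this
  -- division facts
  have hdm : Nat.fib k * R + (Nat.fib i - 1) % Nat.fib k = Nat.fib i - 1 := by
    rw [hRdef]; exact Nat.div_add_mod _ _
  have hmod : (Nat.fib i - 1) % Nat.fib k < Nat.fib k := Nat.mod_lt _ hKN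
  have hrK : (R : ℤ) * Nat.fib k ≤ (Nat.fib i : ℤ) - 1 := by
    have h1 : Nat.fib k * R ≤ Nat.fib i - 1 := by omega
    have h2 : 1 ≤ Nat.fib i := Nat.fib_pos.mpr (by omega)
    have h3 : (Nat.fib k * R : ℤ) ≤ ((Nat.fib i : ℤ) - 1) := by
      have := (Nat.cast_le (α := ℤ)).mpr h1
      push_cast [Nat.cast_sub h2] at this
      linarith
    linarith
  have hrK2 : (Nat.fib i : ℤ) - 1 < ((R : ℤ) + 1) * Nat.fib k := by
    have h1 : Nat.fib i - 1 < Nat.fib k * R + Nat.fib k := by omega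
    have h2 : 1 ≤ Nat.fib i := Nat.fib_pos.mpr (by omega)
    have h3 : ((Nat.fib i : ℤ) - 1) < (Nat.fib k * R : ℤ) + Nat.fib k := by
      have := (Nat.cast_lt (α := ℤ)).mpr h1
      push_cast [Nat.cast_sub h2] at this
      linarith
    linarith
  have hr2 : (2 : ℤ) ≤ (R : ℤ) := by exact_mod_cast hr
  -- coprimality
  have hcop : IsCoprime ((Nat.fib i : ℤ)) ((Nat.fib (i + 2) : ℤ)) := by
    rw [Nat.isCoprime_iff_coprime]
    have h1 : Nat.gcd (Nat.fib i) (Nat.fib (i + 2)) = Nat.fib (Nat.gcd i (i + 2)) := (Nat.fib_gcd i (i + 2)).symm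
    have h2 : Nat.gcd i (i + 2) = Nat.gcd i 2 := by
      rw [show i + 2 = 2 + i from by omega]
      exact Nat.gcd_add_self_right i 2
    have h3 : Nat.gcd i 2 = 1 ∨ Nat.gcd i 2 = 2 := by
      have hd2 := Nat.le_of_dvd (by norm_num) (Nat.gcd_dvd_right i 2)
      have hp : 0 < Nat.gcd i 2 := Nat.gcd_pos_of_pos_right i (by omega)
      omega
    unfold Nat.Coprime
    rw [h1, h2]
    rcases h3 with h | h <;> rw [h] <;> rfl
  -- the two candidate values
  have hg1 : ((Nat.fib i : ℤ) - R * Nat.fib k - 1) * Nat.fib (i + 2) + ((R : ℤ) + 2) * Nat.fib (i + k) - Nat.fib i =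
      ((Nat.fib i : ℤ) + 2*(Nat.fib k : ℤ) - 1)*(Nat.fib (i+2) : ℤ) - ((R:ℤ)+2)*((Nat.fib (k-2) : ℤ)*(Nat.fib i : ℤ)) - Nat.fib i := by
    linear_combination ((R:ℤ) + 2) * hcb
  have hg2 : ((Nat.fib k : ℤ) - 1) * Nat.fib (i + 2) + ((R : ℤ) + 1) * Nat.fib (i + k) - Nat.fib i =
      (((R:ℤ)+2)*(Nat.fib k : ℤ) - 1)*(Nat.fib (i+2) : ℤ) - ((R:ℤ)+1)*((Nat.fib (k-2) : ℤ)*(Nat.fib i : ℤ)) - Nat.fib i := by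
    linear_combination ((R:ℤ) + 1) * hcb
  have hcore := core (Nat.fib i) (Nat.fib (i + 2)) (Nat.fib (i + k)) (Nat.fib k) (Nat.fib (k - 2)) (R : ℤ)
    hA (by exact_mod_cast hKN) (by exact_mod_cast hdN) hB hC hb2 hrK hrK2 hr2 hdK hcb hcop
  -- the if-condition decides which of the two values is the max
  split_ifs with hcond
  · have hle : (((R:ℤ)+2)*(Nat.fib k : ℤ) - 1)*(Nat.fib (i+2) : ℤ) - ((R:ℤ)+1)*((Nat.fib (k-2) : ℤ)*(Nat.fib i : ℤ)) - Nat.fib i ≤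
        ((Nat.fib i : ℤ) + 2*(Nat.fib k : ℤ) - 1)*(Nat.fib (i+2) : ℤ) - ((R:ℤ)+2)*((Nat.fib (k-2) : ℤ)*(Nat.fib i : ℤ)) - Nat.fib i := by
      nlinarith [hcond]
    rw [hg1, ← max_eq_left hle]
    exact hcore
  · push_neg at hcond
    have hle : ((Nat.fib i : ℤ) + 2*(Nat.fib k : ℤ) - 1)*(Nat.fib (i+2) : ℤ) - ((R:ℤ)+2)*((Nat.fib (k-2) : ℤ)*(Nat.fib i : ℤ)) - Nat.fib i ≤
        (((R:ℤ)+2)*(Nat.fib k : ℤ) - 1)*(Nat.fib (i+2) : ℤ) - ((R:ℤ)+1)*((Nat.fib (k-2) : ℤ)*(Nat.fib i : ℤ)) - Nat.fib i := by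
      nlinarith [hcond.le]
    rw [hg2, ← max_eq_right hle]
    exact hcore
end

section
/- Let i, k ≥ 3 and p ≥ 0 be integers with r = ⌊(F_i − 1)/F_k⌋ ≥ p and (r,p) ≠ (0,0). Then the p-Frobenius number of (F_i, F_{i+2}, F_{i+k}) equals (F_i − r·F_k − 1)·F_{i+2} + (r+p)·F_{i+k} − F_i if (F_i − r·F_k)·F_{i+2} ≥ F_{k−2}·F_i, and (F_k − 1)·F_{i+2} + (r+p−1)·F_{i+k} − F_i otherwise. -/
section AuxPFrob
set_option linter.unusedVariables false

lemma repSet_finite (a b c : ℕ) (ha : 0 < a) (hb : 0 < b) (hc : 0 < c) (n : ℤ) :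
    Finite {v : ℕ × ℕ × ℕ // (v.1 : ℤ) * a + v.2.1 * b + v.2.2 * c = n} := by
  have key : ∀ v : {v : ℕ × ℕ × ℕ // (v.1 : ℤ) * a + v.2.1 * b + v.2.2 * c = n},
      v.1.1 < n.toNat + 1 ∧ v.1.2.1 < n.toNat + 1 ∧ v.1.2.2 < n.toNat + 1 := by
    rintro ⟨⟨x, y, z⟩, h⟩
    simp only at h ⊢
    have h1 : (1:ℤ) ≤ a := by exact_mod_cast ha
    have h2 : (1:ℤ) ≤ b := by exact_mod_cast hb
    have h3 : (1:ℤ) ≤ c := by exact_mod_cast hc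
    have hx : (x : ℤ) ≤ n := by nlinarith [Int.ofNat_nonneg x, Int.ofNat_nonneg y, Int.ofNat_nonneg z]
    have hy : (y : ℤ) ≤ n := by nlinarith [Int.ofNat_nonneg x, Int.ofNat_nonneg y, Int.ofNat_nonneg z]
    have hz : (z : ℤ) ≤ n := by nlinarith [Int.ofNat_nonneg x, Int.ofNat_nonneg y, Int.ofNat_nonneg z]
    have hx' : x ≤ n.toNat := by omega
    have hy' : y ≤ n.toNat := by omega
    have hz' : z ≤ n.toNat := by omega
    omega
  apply Finite.of_injective
    (f := fun v => ((⟨v.1.1, (key v).1⟩ : Fin (n.toNat+1)), (⟨v.1.2.1, (key v).2.1⟩ : Fin (n.toNat+1)),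
      (⟨v.1.2.2, (key v).2.2⟩ : Fin (n.toNat+1))))
  rintro ⟨⟨x, y, z⟩, h⟩ ⟨⟨x', y', z'⟩, h'⟩ he
  simp only [Fin.mk.injEq, Prod.mk.injEq] at he
  exact Subtype.ext (by simp [he.1, he.2.1, he.2.2])

lemma repCount_le_of_inj (a b c : ℕ) (n : ℤ) (p : ℕ)
    (f : {v : ℕ × ℕ × ℕ // (v.1 : ℤ) * a + v.2.1 * b + v.2.2 * c = n} → Fin p)
    (hf : Function.Injective f) : repCount a b c n ≤ p := by
  have := Nat.card_le_card_of_injective f hf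
  simpa [repCount] using this

lemma le_repCount_of_inj (a b c : ℕ) (ha : 0 < a) (hb : 0 < b) (hc : 0 < c) (n : ℤ) (p : ℕ)
    (f : Fin (p+1) → {v : ℕ × ℕ × ℕ // (v.1 : ℤ) * a + v.2.1 * b + v.2.2 * c = n})
    (hf : Function.Injective f) : p + 1 ≤ repCount a b c n := by
  haveI := repSet_finite a b c ha hb hc n
  have := Nat.card_le_card_of_injective f hf
  simpa [repCount] using this

set_option linter.unusedSectionVars false

section CoreZ

variable (a b c q s r e p : ℤ)
variable (hb : 1 ≤ b) (hq : 1 ≤ q) (hs : 1 ≤ s) (hr : 1 ≤ r) (hp : 0 ≤ p) (hpr : p ≤ r)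
variable (he1 : 1 ≤ e) (he2 : e ≤ q) (hae : a = r*q + e) (hcc : c = q*b - s*a) (hcs : s*a ≤ c)

include hb hq hs hr hp hpr he1 he2 hae hcc hcs

lemma ha1 : 1 ≤ a := by
  have h1 : 0 < r*q := mul_pos (by linarith) (by linarith)
  linarith

lemma hsa0 : 0 ≤ s*a := by
  have := ha1 a b c q s r e p hb hq hs hr hp hpr he1 he2 hae hcc hcs
  exact mul_nonneg (by linarith) (by linarith)

lemma key_ineq : (r+1)*(s*a) ≤ a*b := by
  have ha' := ha1 a b c q s r e p hb hq hs hr hp hpr he1 he2 hae hcc hcs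
  have h2 : 2*(s*a) ≤ q*b := by linarith
  have h1 : (r+1)*(2*(s*a)) ≤ (r+1)*(q*b) := by
    apply mul_le_mul_of_nonneg_left h2 (by linarith)
  have hrq : (r+1)*q ≤ 2*a := by nlinarith
  have h3 : ((r+1)*q)*b ≤ (2*a)*b := by
    apply mul_le_mul_of_nonneg_right hrq (by linarith)
  nlinarith [h1, h3]

lemma coreStep (m z zstar : ℤ) (hm : 0 ≤ m - 1) (hzb : z - zstar ≤ (m-1)*(r+1)) :
    (z - zstar)*(s*a) ≤ (m-1)*(a*b) := by
  have ha' := ha1 a b c q s r e p hb hq hs hr hp hpr he1 he2 hae hcc hcs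
  have hsa : 0 ≤ s*a := hsa0 a b c q s r e p hb hq hs hr hp hpr he1 he2 hae hcc hcs
  have hab : 0 ≤ a*b := by nlinarith
  rcases le_or_gt (z - zstar) 0 with h0 | h0
  · have := mul_nonneg hm hab
    nlinarith [mul_nonpos_of_nonpos_of_nonneg h0 hsa]
  · have t3 : (z - zstar)*(s*a) ≤ ((m-1)*(r+1))*(s*a) :=
      mul_le_mul_of_nonneg_right hzb hsa
    have t4 : (m-1)*((r+1)*(s*a)) ≤ (m-1)*(a*b) :=
      mul_le_mul_of_nonneg_left (key_ineq a b c q s r e p hb hq hs hr hp hpr he1 he2 hae hcc hcs) hm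
    nlinarith [t3, t4]

end CoreZ

section CoreA
variable (a b c q s r e p : ℤ)
variable (hb : 1 ≤ b) (hq : 1 ≤ q) (hs : 1 ≤ s) (hr : 1 ≤ r) (hp : 0 ≤ p) (hpr : p ≤ r)
variable (he1 : 1 ≤ e) (he2 : e ≤ q) (hae : a = r*q + e) (hcc : c = q*b - s*a) (hcs : s*a ≤ c)

include hb hq hs hr hp hpr he1 he2 hae hcc hcs

-- Case 1 (s*a ≤ e*b), p ≥ 1 : t* = p*q - 1, G = (p*q - 1 + a)*b - (r+p)*(s*a)
lemma coreA1 (hp1 : 1 ≤ p) (m z : ℤ) (hm : 0 ≤ m) (hz : 0 ≤ z)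
    (hzq : z*q ≤ (p*q - 1) + m*a)
    (hv : ((p*q - 1) + m*a)*b - z*(s*a) ≤ ((p*q - 1 + a)*b - (r+p)*(s*a)) - a) :
    m = 0 ∧ z < p := by
  have ha' := ha1 a b c q s r e p hb hq hs hr hp hpr he1 he2 hae hcc hcs
  rcases hm.eq_or_lt with h0 | h0
  · subst h0
    refine ⟨rfl, ?_⟩
    by_contra hcon
    push_neg at hcon
    have : p*q ≤ z*q := mul_le_mul_of_nonneg_right hcon (by linarith)
    simp only [zero_mul, add_zero] at hzq
    linarith
  · exfalso
    have hm1 : 1 ≤ m := h0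
    have hme : m*e ≤ m*q := mul_le_mul_of_nonneg_left he2 (by linarith)
    have hma : m*a = m*(r*q) + m*e := by rw [hae]; ring
    have h1 : z*q < (p + m*r + m)*q := by nlinarith [hme, hma]
    have h2 : z < p + m*r + m := lt_of_mul_lt_mul_right h1 (by linarith)
    have hzb : z - (r+p) ≤ (m-1)*(r+1) := by nlinarith [h2]
    have hstep := coreStep a b c q s r e p hb hq hs hr hp hpr he1 he2 hae hcc hcs
      m z (r+p) (by linarith) hzb
    nlinarith [hstep]

-- Case 1, p = 0 : t* = a - 1, G = (a-1)*b - r*(s*a); no pair has value ≤ G - a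
lemma coreA2 (m z : ℤ) (hm : 0 ≤ m) (hz : 0 ≤ z)
    (hzq : z*q ≤ (a - 1) + m*a)
    (hv : ((a - 1) + m*a)*b - z*(s*a) ≤ ((a-1)*b - r*(s*a)) - a) :
    False := by
  have ha' := ha1 a b c q s r e p hb hq hs hr hp hpr he1 he2 hae hcc hcs
  have hme : (m+1)*e ≤ (m+1)*q := mul_le_mul_of_nonneg_left he2 (by linarith)
  have hma : (m+1)*a = (m+1)*(r*q) + (m+1)*e := by rw [hae]; ring
  have h1 : z*q < ((m+1)*(r+1))*q := by nlinarith [hme, hma]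
  have h2 : z < (m+1)*(r+1) := lt_of_mul_lt_mul_right h1 (by linarith)
  have hzb : z - r ≤ (m+1-1)*(r+1) := by nlinarith [h2]
  have hstep := coreStep a b c q s r e p hb hq hs hr hp hpr he1 he2 hae hcc hcs
    (m+1) z r (by linarith) hzb
  nlinarith [hstep]

-- Case 2 (e*b ≤ s*a), p ≥ 1 : t* = p*q - e - 1, G = (p*q - e - 1 + a)*b - (r+p-1)*(s*a)
lemma coreA3 (hp1 : 1 ≤ p) (m z : ℤ) (hm : 0 ≤ m) (hz : 0 ≤ z)
    (hzq : z*q ≤ (p*q - e - 1) + m*a)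
    (hv : ((p*q - e - 1) + m*a)*b - z*(s*a) ≤ ((p*q - e - 1 + a)*b - (r+p-1)*(s*a)) - a) :
    m = 0 ∧ z < p := by
  have ha' := ha1 a b c q s r e p hb hq hs hr hp hpr he1 he2 hae hcc hcs
  rcases hm.eq_or_lt with h0 | h0
  · subst h0
    refine ⟨rfl, ?_⟩
    by_contra hcon
    push_neg at hcon
    have : p*q ≤ z*q := mul_le_mul_of_nonneg_right hcon (by linarith)
    simp only [zero_mul, add_zero] at hzq
    linarith
  · exfalso
    have hm1 : 1 ≤ m := h0
    have hme : (m-1)*e ≤ (m-1)*q := mul_le_mul_of_nonneg_left he2 (by linarith)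
    have hma : m*a = m*(r*q) + m*e := by rw [hae]; ring
    have h1 : z*q < (p + m*r + m - 1)*q := by nlinarith [hme, hma]
    have h2 : z < p + m*r + m - 1 := lt_of_mul_lt_mul_right h1 (by linarith)
    have hzb : z - (r+p-1) ≤ (m-1)*(r+1) := by nlinarith [h2]
    have hstep := coreStep a b c q s r e p hb hq hs hr hp hpr he1 he2 hae hcc hcs
      m z (r+p-1) (by linarith) hzb
    nlinarith [hstep]

-- Case 2, p = 0 : t* = r*q - 1, G = (r*q-1)*b - (r-1)*(s*a); no pair has value ≤ G - a
lemma coreA4 (m z : ℤ) (hm : 0 ≤ m) (hz : 0 ≤ z)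
    (hzq : z*q ≤ (r*q - 1) + m*a)
    (hv : ((r*q - 1) + m*a)*b - z*(s*a) ≤ ((r*q-1)*b - (r-1)*(s*a)) - a) :
    False := by
  have ha' := ha1 a b c q s r e p hb hq hs hr hp hpr he1 he2 hae hcc hcs
  have hme : m*e ≤ m*q := mul_le_mul_of_nonneg_left he2 (by linarith)
  have hma : m*a = m*(r*q) + m*e := by rw [hae]; ring
  have h1 : z*q < ((m+1)*r + m)*q := by nlinarith [hme, hma]
  have h2 : z < (m+1)*r + m := lt_of_mul_lt_mul_right h1 (by linarith)
  have hzb : z - (r-1) ≤ (m+1-1)*(r+1) := by nlinarith [h2]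
  have hstep := coreStep a b c q s r e p hb hq hs hr hp hpr he1 he2 hae hcc hcs
    (m+1) z (r-1) (by linarith) hzb
  nlinarith [hstep]

end CoreA

section CoreB
variable (a b c q s r e p : ℤ)
variable (hb : 1 ≤ b) (hq : 1 ≤ q) (hs : 1 ≤ s) (hr : 1 ≤ r) (hp : 0 ≤ p) (hpr : p ≤ r)
variable (he1 : 1 ≤ e) (he2 : e ≤ q) (hae : a = r*q + e) (hcc : c = q*b - s*a) (hcs : s*a ≤ c)
variable (t j u : ℤ) (ht : t = j*q + u) (hu0 : 0 ≤ u) (hu1 : u ≤ q - 1) (hj0 : 0 ≤ j)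
variable (hjr : j ≤ r) (hta : t ≤ a - 1)

include hb hq hs hr hp hpr he1 he2 hae hcc hcs ht hu0 hu1 hj0 hjr hta

-- witnesses with j ≥ p, m = 0, worst z = j - p
lemma B1c1 (hcase : s*a ≤ e*b) (hjp : p ≤ j) :
    t*b - (j-p)*(s*a) ≤ (a + p*q - 1)*b - (r+p)*(s*a) := by
  have ha' := ha1 a b c q s r e p hb hq hs hr hp hpr he1 he2 hae hcc hcs
  have hsa : 0 ≤ s*a := hsa0 a b c q s r e p hb hq hs hr hp hpr he1 he2 hae hcc hcs
  have hqb2 : 0 ≤ q*b - 2*(s*a) := by linarith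
  rcases eq_or_lt_of_le hjr with hjr' | hjr'
  · -- j = r
    have h1 : 0 ≤ (a - 1 - t)*b := mul_nonneg (by linarith) (by linarith)
    have h2 : 0 ≤ p*(q*b - 2*(s*a)) := mul_nonneg hp hqb2
    nlinarith [h1, h2]
  · -- j ≤ r - 1
    have hX : a - 1 - t - ((r-j-1)*q + e) = q - 1 - u := by rw [hae, ht]; ring
    have h1 : 0 ≤ (q - 1 - u)*b := mul_nonneg (by linarith) (by linarith)
    have h2 : 0 ≤ (r-j-1)*(q*b - 2*(s*a)) := mul_nonneg (by linarith) hqb2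
    have h3 : 0 ≤ p*(q*b - 2*(s*a)) := mul_nonneg hp hqb2
    have h4 : 0 ≤ (r-j-1)*(s*a) := mul_nonneg (by linarith) hsa
    nlinarith [h1, h2, h3, h4, hX, hcase]

lemma B1c2 (hcase : e*b ≤ s*a) (hjp : p ≤ j) :
    t*b - (j-p)*(s*a) ≤ ((r+p)*q - 1)*b - (r+p-1)*(s*a) := by
  have ha' := ha1 a b c q s r e p hb hq hs hr hp hpr he1 he2 hae hcc hcs
  have hsa : 0 ≤ s*a := hsa0 a b c q s r e p hb hq hs hr hp hpr he1 he2 hae hcc hcs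
  have hqb2 : 0 ≤ q*b - 2*(s*a) := by linarith
  rcases eq_or_lt_of_le hjr with hjr' | hjr'
  · have h1 : 0 ≤ (a - 1 - t)*b := mul_nonneg (by linarith) (by linarith)
    have h2 : 0 ≤ p*(q*b - 2*(s*a)) := mul_nonneg hp hqb2
    nlinarith [h1, h2, hcase]
  · have hX : a - 1 - t - ((r-j-1)*q + e) = q - 1 - u := by rw [hae, ht]; ring
    have h1 : 0 ≤ (q - 1 - u)*b := mul_nonneg (by linarith) (by linarith)
    have h2 : 0 ≤ (r-j-1)*(q*b - 2*(s*a)) := mul_nonneg (by linarith) hqb2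
    have h3 : 0 ≤ p*(q*b - 2*(s*a)) := mul_nonneg hp hqb2
    have h4 : 0 ≤ (r-j-1)*(s*a) := mul_nonneg (by linarith) hsa
    nlinarith [h1, h2, h3, h4, hX]

-- witnesses with j < p, m = 0, worst z = 0
lemma B2c1 (hcase : s*a ≤ e*b) (hjp : j ≤ p - 1) :
    t*b ≤ (a + p*q - 1)*b - (r+p)*(s*a) := by
  have ha' := ha1 a b c q s r e p hb hq hs hr hp hpr he1 he2 hae hcc hcs
  have hsa : 0 ≤ s*a := hsa0 a b c q s r e p hb hq hs hr hp hpr he1 he2 hae hcc hcs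
  have hqb2 : 0 ≤ q*b - 2*(s*a) := by linarith
  have htp : t ≤ p*q - 1 := by nlinarith [ht, hu1, hjp, hq]
  have h1 : 0 ≤ (p*q - 1 - t)*b := mul_nonneg (by linarith) (by linarith)
  have h2 : 0 ≤ r*(q*b - 2*(s*a)) := mul_nonneg (by linarith) hqb2
  have h3 : 0 ≤ (r-p)*(s*a) := mul_nonneg (by linarith) hsa
  have h4 : 0 ≤ e*b := mul_nonneg (by linarith) (by linarith)
  nlinarith [h1, h2, h3, h4]

lemma B2c2 (hcase : e*b ≤ s*a) (hjp : j ≤ p - 1) :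
    t*b ≤ ((r+p)*q - 1)*b - (r+p-1)*(s*a) := by
  have ha' := ha1 a b c q s r e p hb hq hs hr hp hpr he1 he2 hae hcc hcs
  have hsa : 0 ≤ s*a := hsa0 a b c q s r e p hb hq hs hr hp hpr he1 he2 hae hcc hcs
  have hqb2 : 0 ≤ q*b - 2*(s*a) := by linarith
  have htp : t ≤ p*q - 1 := by nlinarith [ht, hu1, hjp, hq]
  have h1 : 0 ≤ (p*q - 1 - t)*b := mul_nonneg (by linarith) (by linarith)
  have h2 : 0 ≤ r*(q*b - 2*(s*a)) := mul_nonneg (by linarith) hqb2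
  have h3 : 0 ≤ (r-p+1)*(s*a) := mul_nonneg (by linarith) hsa
  nlinarith [h1, h2, h3]

-- witnesses with j < p, m = 1, θ = 1 (u + e ≥ q), worst z0 = 2*j + r + 2 - p
lemma B3c1t1 (hcase : s*a ≤ e*b) (hjp : j ≤ p - 1) (hue : q ≤ u + e) :
    (t+a)*b - (2*j + r + 2 - p)*(s*a) ≤ (a + p*q - 1)*b - (r+p)*(s*a) := by
  have ha' := ha1 a b c q s r e p hb hq hs hr hp hpr he1 he2 hae hcc hcs
  have hsa : 0 ≤ s*a := hsa0 a b c q s r e p hb hq hs hr hp hpr he1 he2 hae hcc hcs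
  have hqb2 : 0 ≤ q*b - 2*(s*a) := by linarith
  have h1 : 0 ≤ (q - 1 - u)*b := mul_nonneg (by linarith) (by linarith)
  have h2 : 0 ≤ (p-j-1)*(q*b - 2*(s*a)) := mul_nonneg (by linarith) hqb2
  nlinarith [h1, h2, ht]

lemma B3c1t0 (hcase : s*a ≤ e*b) (hjp : j ≤ p - 1) (hue : u + e ≤ q - 1) :
    (t+a)*b - (2*j + r + 1 - p)*(s*a) ≤ (a + p*q - 1)*b - (r+p)*(s*a) := by
  have ha' := ha1 a b c q s r e p hb hq hs hr hp hpr he1 he2 hae hcc hcs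
  have hsa : 0 ≤ s*a := hsa0 a b c q s r e p hb hq hs hr hp hpr he1 he2 hae hcc hcs
  have hqb2 : 0 ≤ q*b - 2*(s*a) := by linarith
  have h1 : 0 ≤ (q - 1 - u - e)*b := mul_nonneg (by linarith) (by linarith)
  have h2 : 0 ≤ (p-j-1)*(q*b - 2*(s*a)) := mul_nonneg (by linarith) hqb2
  nlinarith [h1, h2, ht, hcase]

lemma B3c2t1 (hcase : e*b ≤ s*a) (hjp : j ≤ p - 1) (hue : q ≤ u + e) :
    (t+a)*b - (2*j + r + 2 - p)*(s*a) ≤ ((r+p)*q - 1)*b - (r+p-1)*(s*a) := by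
  have ha' := ha1 a b c q s r e p hb hq hs hr hp hpr he1 he2 hae hcc hcs
  have hsa : 0 ≤ s*a := hsa0 a b c q s r e p hb hq hs hr hp hpr he1 he2 hae hcc hcs
  have hqb2 : 0 ≤ q*b - 2*(s*a) := by linarith
  have h1 : 0 ≤ (q - 1 - u)*b := mul_nonneg (by linarith) (by linarith)
  have h2 : 0 ≤ (p-j-1)*(q*b - 2*(s*a)) := mul_nonneg (by linarith) hqb2
  nlinarith [h1, h2, ht, hae, hcase]

lemma B3c2t0 (hcase : e*b ≤ s*a) (hjp : j ≤ p - 1) (hue : u + e ≤ q - 1) :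
    (t+a)*b - (2*j + r + 1 - p)*(s*a) ≤ ((r+p)*q - 1)*b - (r+p-1)*(s*a) := by
  have ha' := ha1 a b c q s r e p hb hq hs hr hp hpr he1 he2 hae hcc hcs
  have hsa : 0 ≤ s*a := hsa0 a b c q s r e p hb hq hs hr hp hpr he1 he2 hae hcc hcs
  have hqb2 : 0 ≤ q*b - 2*(s*a) := by linarith
  have h1 : 0 ≤ (q - 1 - u - e)*b := mul_nonneg (by linarith) (by linarith)
  have h2 : 0 ≤ (p-j-1)*(q*b - 2*(s*a)) := mul_nonneg (by linarith) hqb2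
  nlinarith [h1, h2, ht, hae]

end CoreB
lemma partA_s12 (a b c q s tstar p : ℕ) (G : ℤ)
    (ha : 0 < a)
    (hts : tstar < a)
    (hcop : Nat.Coprime a b)
    (hcz : (c:ℤ) = q*b - s*a)
    (hdvd : (a:ℤ) ∣ (G - a) - tstar*b)
    (core : ∀ m z : ℤ, 0 ≤ m → 0 ≤ z → z*q ≤ tstar + m*a →
      ((tstar:ℤ) + m*a)*b - z*((s:ℤ)*a) ≤ G - a → m = 0 ∧ z < p) :
    repCount a b c (G - a) ≤ p := by
  have hcop' : IsCoprime (a:ℤ) (b:ℤ) := Int.isCoprime_iff_gcd_eq_one.mpr (by exact_mod_cast hcop)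
  have key : ∀ v : {v : ℕ × ℕ × ℕ // (v.1 : ℤ) * a + v.2.1 * b + v.2.2 * c = G - a},
      v.1.2.2 < p ∧ v.1.2.1 + q * v.1.2.2 = tstar := by
    rintro ⟨⟨x, y, z⟩, h⟩
    simp only at h ⊢
    have hval : ((y:ℤ) + q*z)*b - z*((s:ℤ)*a) = (G - a) - x*a := by
      linear_combination h - (z:ℤ)*hcz
    have hdvd2 : (a:ℤ) ∣ (((y:ℤ) + q*z) - tstar)*b := by
      have h1 : (((y:ℤ) + q*z) - tstar)*b = a*((z:ℤ)*s - x) + ((G - a) - tstar*b) := by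
        linear_combination hval
      rw [h1]
      exact dvd_add (Dvd.intro _ rfl) hdvd
    have hdvd3 : (a:ℤ) ∣ ((y:ℤ) + q*z) - tstar := hcop'.dvd_of_dvd_mul_right hdvd2
    have hMt : (tstar:ℤ) ≤ (y:ℤ) + q*z := by
      by_contra hcon
      push_neg at hcon
      have h2 : (a:ℤ) ∣ (tstar:ℤ) - ((y:ℤ) + q*z) := by
        simpa [neg_sub] using dvd_neg.mpr hdvd3
      have h3 : (0:ℤ) < (tstar:ℤ) - ((y:ℤ) + q*z) := by linarith
      have h4 := Int.le_of_dvd h3 h2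
      have h5 : (tstar:ℤ) < a := by exact_mod_cast hts
      have h6 : (0:ℤ) ≤ (y:ℤ) + q*z := by positivity
      linarith
    obtain ⟨m, hm⟩ := hdvd3
    have ha' : (1:ℤ) ≤ a := by exact_mod_cast ha
    have hm0 : 0 ≤ m := by
      rcases le_or_gt 0 m with h' | h'
      · exact h'
      · exfalso
        have : m ≤ -1 := by linarith
        have := mul_le_mul_of_nonneg_left this (show (0:ℤ) ≤ a by linarith)
        linarith [hm, hMt]
    have hM : ((y:ℤ) + q*z) = tstar + m*a := by linarith [hm]
    have hzq : (z:ℤ)*q ≤ tstar + m*a := by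
      rw [← hM]; nlinarith [Int.ofNat_nonneg y, mul_comm (z:ℤ) (q:ℤ)]
    have hvle : ((tstar:ℤ) + m*a)*b - z*((s:ℤ)*a) ≤ G - a := by
      rw [← hM]
      have : (0:ℤ) ≤ (x:ℤ)*a := by positivity
      linarith [hval]
    obtain ⟨hm0', hzp⟩ := core m z hm0 (by positivity) hzq hvle
    constructor
    · exact_mod_cast hzp
    · have : ((y:ℤ) + q*z) = tstar := by rw [hM, hm0']; ring
      exact_mod_cast this
  apply repCount_le_of_inj a b c (G - a) p (fun v => ⟨v.1.2.2, (key v).1⟩)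
  rintro ⟨⟨x1, y1, z1⟩, h1⟩ ⟨⟨x2, y2, z2⟩, h2⟩ he
  simp only [Fin.mk.injEq] at he
  have k1 := (key ⟨(x1, y1, z1), h1⟩).2
  have k2 := (key ⟨(x2, y2, z2), h2⟩).2
  have k1' : y1 + q * z1 = tstar := k1
  have k2' : y2 + q * z2 = tstar := k2
  have he' : z1 = z2 := he
  subst he'
  have hy : y1 = y2 := by omega
  have hx : x1 = x2 := by
    have ha' : (0:ℤ) < a := by exact_mod_cast ha
    have : (x1:ℤ)*a = (x2:ℤ)*a := by
      rw [hy] at h1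
      linarith [h1, h2]
    have := mul_right_cancel₀ (by linarith : (a:ℤ) ≠ 0) this
    exact_mod_cast this
  exact Subtype.ext (by simp [hx, hy])
lemma partB_s12 (a b c q s p t : ℕ) (G n : ℤ)
    (ha : 0 < a) (hb : 0 < b) (hc : 0 < c)
    (hcz : (c:ℤ) = q*b - s*a)
    (hn : G - a < n)
    (hdvd : (a:ℤ) ∣ n - t*b)
    (mu nu : ℕ → ℕ)
    (hcons : ∀ l ≤ p, q * nu l ≤ t + mu l * a)
    (hval : ∀ l ≤ p, ((t:ℤ) + mu l * a)*b - nu l * ((s:ℤ)*a) ≤ G)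
    (hmono : ∀ l1 l2, l1 < l2 → l2 ≤ p → nu l1 < nu l2) :
    p + 1 ≤ repCount a b c n := by
  have ha' : (1:ℤ) ≤ a := by exact_mod_cast ha
  -- the value of witness l
  set V : ℕ → ℤ := fun l => ((t:ℤ) + mu l * a)*b - nu l * ((s:ℤ)*a) with hV
  have hdl : ∀ l, (a:ℤ) ∣ n - V l := by
    intro l
    have h1 : n - V l = (n - t*b) + a*((nu l)*s - (mu l)*b) := by simp only [hV]; ring
    rw [h1]
    exact dvd_add hdvd (Dvd.intro _ rfl)
  have hnn : ∀ l ≤ p, 0 ≤ n - V l := by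
    intro l hl
    obtain ⟨w, hw⟩ := hdl l
    have h2 : -(a:ℤ) < a * w := by
      have hVG : V l ≤ G := hval l hl
      linarith [hw, hVG]
    have hw0 : 0 ≤ w := by
      rcases le_or_gt 0 w with h' | h'
      · exact h'
      · exfalso
        have : w ≤ -1 := by linarith
        have := mul_le_mul_of_nonneg_left this (show (0:ℤ) ≤ a by linarith)
        linarith
    rw [hw]
    positivity
  -- components
  have hyl : ∀ l ≤ p, ((t + mu l * a - q * nu l : ℕ) : ℤ) = (t:ℤ) + mu l * a - q * nu l := by
    intro l hl
    have := hcons l hl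
    push_cast [Nat.cast_sub this]
    ring
  have hxl : ∀ l ≤ p, ((((n - V l)/a).toNat : ℤ)) * a = n - V l := by
    intro l hl
    have h1 : (0:ℤ) ≤ (n - V l)/a := Int.ediv_nonneg (hnn l hl) (by linarith)
    rw [Int.toNat_of_nonneg h1]
    rw [Int.ediv_mul_cancel (hdl l)]
  -- the injection
  have hmem : ∀ l : Fin (p+1),
      (((((n - V l.1)/a).toNat : ℕ)):ℤ) * a + ((t + mu l.1 * a - q * nu l.1 : ℕ):ℤ) * b
        + (nu l.1 : ℤ) * c = n := by
    intro l
    have hl : l.1 ≤ p := by omega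
    rw [hxl l.1 hl, hyl l.1 hl, hcz]
    simp only [hV]
    ring
  apply le_repCount_of_inj a b c ha hb hc n p
    (f := fun l => ⟨(((n - V l.1)/a).toNat, t + mu l.1 * a - q * nu l.1, nu l.1), hmem l⟩)
  intro l1 l2 hf
  simp only [Subtype.mk.injEq, Prod.mk.injEq] at hf
  have hnu : nu l1.1 = nu l2.1 := hf.2.2
  by_contra hne
  have hne' : l1.1 ≠ l2.1 := fun h => hne (Fin.ext h)
  rcases lt_or_gt_of_ne hne' with h' | h'
  · exact absurd hnu (Nat.ne_of_lt (hmono _ _ h' (by omega)))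
  · exact absurd hnu.symm (Nat.ne_of_lt (hmono _ _ h' (by omega)))
lemma exists_t (a b : ℕ) (ha : 0 < a) (hcop : Nat.Coprime a b) (n : ℤ) :
    ∃ t : ℕ, t < a ∧ (a:ℤ) ∣ n - t*b := by
  have hcop' : IsCoprime (a:ℤ) (b:ℤ) := Int.isCoprime_iff_gcd_eq_one.mpr (by exact_mod_cast hcop)
  obtain ⟨u, v, huv⟩ := hcop'
  have ha' : (0:ℤ) < a := by exact_mod_cast ha
  set t0 : ℤ := (n*v) % a with ht0
  have h1 : 0 ≤ t0 := Int.emod_nonneg _ (by linarith)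
  have h2 : t0 < a := Int.emod_lt_of_pos _ ha'
  refine ⟨t0.toNat, ?_, ?_⟩
  · have : (t0.toNat : ℤ) = t0 := Int.toNat_of_nonneg h1
    exact_mod_cast this.symm ▸ h2
  · have h3 : (t0.toNat : ℤ) = t0 := Int.toNat_of_nonneg h1
    rw [h3]
    have hmod : t0 = n*v - a*((n*v)/a) := by rw [ht0, Int.emod_def]
    refine ⟨n*u + ((n*v)/a)*b, ?_⟩
    have : u*a + v*b = 1 := huv
    linear_combination (-n : ℤ)*this - b*hmod + n
lemma partA_all (a b c q s r e p : ℕ) (G : ℤ)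
    (h2a : 2 ≤ a) (hb1 : 1 ≤ b) (hq1 : 1 ≤ q) (hs1 : 1 ≤ s) (hr1 : 1 ≤ r) (hpr : p ≤ r)
    (he1 : 1 ≤ e) (he2 : e ≤ q) (he : a = r*q + e)
    (hcz : (c:ℤ) = q*b - s*a) (hcs : (s:ℤ)*a ≤ c) (hcop : Nat.Coprime a b)
    (hGcase : ((s:ℤ)*a ≤ e*b ∧ G = ((a:ℤ) + p*q - 1)*b - ((r:ℤ)+p)*((s:ℤ)*a))
      ∨ ((e:ℤ)*b ≤ s*a ∧ G = (((r:ℤ)+p)*q - 1)*b - ((r:ℤ)+p-1)*((s:ℤ)*a))) :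
    repCount a b c (G - a) ≤ p := by
  have hbZ : (1:ℤ) ≤ b := by exact_mod_cast hb1
  have hqZ : (1:ℤ) ≤ q := by exact_mod_cast hq1
  have hsZ : (1:ℤ) ≤ s := by exact_mod_cast hs1
  have hrZ : (1:ℤ) ≤ r := by exact_mod_cast hr1
  have hpZ : (0:ℤ) ≤ p := by positivity
  have hprZ : (p:ℤ) ≤ r := by exact_mod_cast hpr
  have he1Z : (1:ℤ) ≤ e := by exact_mod_cast he1
  have he2Z : (e:ℤ) ≤ q := by exact_mod_cast he2
  have haeZ : (a:ℤ) = r*q + e := by exact_mod_cast he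
  have hrq : r*q ≤ a - 1 := by
    have h0 : 1 ≤ e := he1
    omega
  have hpq : p*q ≤ r*q := Nat.mul_le_mul_right q hpr
  rcases hGcase with ⟨hcase, hGeq⟩ | ⟨hcase, hGeq⟩
  · -- case 1
    rcases Nat.eq_zero_or_pos p with hp0 | hp1
    · subst hp0
      apply partA_s12 a b c q s (a-1) 0 G (by omega) (by omega) hcop hcz
      · refine ⟨-((r:ℤ)*s) - 1, ?_⟩
        rw [hGeq]
        push_cast [Nat.cast_sub (show 1 ≤ a by omega)]
        ring
      · intro m z hm hz hzq hvle
        exfalso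
        have hcast : ((a - 1 : ℕ):ℤ) = (a:ℤ) - 1 := by omega
        rw [hcast] at hzq hvle
        refine coreA2 (a:ℤ) b c q s r e 0 hbZ hqZ hsZ hrZ le_rfl (by linarith)
          he1Z he2Z haeZ hcz hcs m z hm hz hzq ?_
        rw [hGeq] at hvle
        push_cast at hvle ⊢
        linarith
    · have hp1Z : (1:ℤ) ≤ p := by exact_mod_cast hp1
      have hpq1 : 1 ≤ p*q := Nat.mul_pos hp1 (by omega)
      have hcast : ((p*q - 1 : ℕ):ℤ) = (p:ℤ)*q - 1 := by push_cast [Nat.cast_sub hpq1]; ring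
      apply partA_s12 a b c q s (p*q-1) p G (by omega) (by omega) hcop hcz
      · refine ⟨(b:ℤ) - ((r:ℤ)+p)*s - 1, ?_⟩
        rw [hGeq, hcast]
        ring
      · intro m z hm hz hzq hvle
        rw [hcast] at hzq hvle
        refine coreA1 (a:ℤ) b c q s r e p hbZ hqZ hsZ hrZ hpZ hprZ
          he1Z he2Z haeZ hcz hcs hp1Z m z hm hz hzq ?_
        rw [hGeq] at hvle
        linarith
  · -- case 2
    have h2e : 2*(e:ℤ) ≤ q := by
      have h1 : 2*((e:ℤ)*b) ≤ q*b := by linarith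
      have h2 : (2*(e:ℤ))*b ≤ q*b := by linarith
      exact le_of_mul_le_mul_right h2 (by linarith)
    have heq : e < q := by
      have : 2*e ≤ q := by exact_mod_cast h2e
      omega
    rcases Nat.eq_zero_or_pos p with hp0 | hp1
    · subst hp0
      have hcast : ((r*q - 1 : ℕ):ℤ) = (r:ℤ)*q - 1 := by
        have : 1 ≤ r*q := Nat.mul_pos (by omega) (by omega)
        push_cast [Nat.cast_sub this]; ring
      apply partA_s12 a b c q s (r*q-1) 0 G (by omega) (by omega) hcop hcz
      · refine ⟨-(((r:ℤ)-1)*s) - 1, ?_⟩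
        rw [hGeq, hcast]
        push_cast
        ring
      · intro m z hm hz hzq hvle
        exfalso
        rw [hcast] at hzq hvle
        refine coreA4 (a:ℤ) b c q s r e 0 hbZ hqZ hsZ hrZ le_rfl (by linarith)
          he1Z he2Z haeZ hcz hcs m z hm hz hzq ?_
        rw [hGeq] at hvle
        push_cast at hvle ⊢
        linarith
    · have hp1Z : (1:ℤ) ≤ p := by exact_mod_cast hp1
      have hqpq : q ≤ p*q := Nat.le_mul_of_pos_left q hp1
      have hcast : ((p*q - e - 1 : ℕ):ℤ) = (p:ℤ)*q - e - 1 := by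
        push_cast [Nat.cast_sub (show e + 1 ≤ p*q by omega), Nat.cast_sub (show e ≤ p*q by omega)]
        omega
      apply partA_s12 a b c q s (p*q-e-1) p G (by omega) (by omega) hcop hcz
      · refine ⟨(b:ℤ) - ((r:ℤ)+p-1)*s - 1, ?_⟩
        rw [hGeq, hcast]
        have hsplit : ((r:ℤ)+p)*q - 1 = ((p:ℤ)*q - e - 1) + a := by rw [haeZ]; ring
        rw [hsplit]
        ring
      · intro m z hm hz hzq hvle
        rw [hcast] at hzq hvle
        refine coreA3 (a:ℤ) b c q s r e p hbZ hqZ hsZ hrZ hpZ hprZ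
          he1Z he2Z haeZ hcz hcs hp1Z m z hm hz hzq ?_
        rw [hGeq] at hvle
        have hsplit : ((r:ℤ)+p)*q - 1 = ((p:ℤ)*q - e - 1) + a := by rw [haeZ]; ring
        rw [hsplit] at hvle
        linarith
lemma partB_all (a b c q s r e p : ℕ) (G n : ℤ)
    (h2a : 2 ≤ a) (hb1 : 1 ≤ b) (hc1 : 1 ≤ c) (hq1 : 1 ≤ q) (hs1 : 1 ≤ s) (hr1 : 1 ≤ r)
    (hpr : p ≤ r)
    (he1 : 1 ≤ e) (he2 : e ≤ q) (he : a = r*q + e)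
    (hcz : (c:ℤ) = q*b - s*a) (hcs : (s:ℤ)*a ≤ c) (hcop : Nat.Coprime a b)
    (hGcase : ((s:ℤ)*a ≤ e*b ∧ G = ((a:ℤ) + p*q - 1)*b - ((r:ℤ)+p)*((s:ℤ)*a))
      ∨ ((e:ℤ)*b ≤ s*a ∧ G = (((r:ℤ)+p)*q - 1)*b - ((r:ℤ)+p-1)*((s:ℤ)*a)))
    (hn : G - a < n) :
    p + 1 ≤ repCount a b c n := by
  have hbZ : (1:ℤ) ≤ b := by exact_mod_cast hb1
  have hqZ : (1:ℤ) ≤ q := by exact_mod_cast hq1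
  have hsZ : (1:ℤ) ≤ s := by exact_mod_cast hs1
  have hrZ : (1:ℤ) ≤ r := by exact_mod_cast hr1
  have hpZ : (0:ℤ) ≤ p := by positivity
  have hprZ : (p:ℤ) ≤ r := by exact_mod_cast hpr
  have he1Z : (1:ℤ) ≤ e := by exact_mod_cast he1
  have he2Z : (e:ℤ) ≤ q := by exact_mod_cast he2
  have haeZ : (a:ℤ) = r*q + e := by exact_mod_cast he
  have haZ : (1:ℤ) ≤ a := by exact_mod_cast (show 1 ≤ a by omega)
  have hsa0 : (0:ℤ) ≤ (s:ℤ)*a := by positivity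
  obtain ⟨t, hta, hdvd⟩ := exists_t a b (by omega) hcop n
  set j := t / q with hjdef
  have hju : q*j + t % q = t := by rw [hjdef]; exact Nat.div_add_mod _ _
  set u := t % q with hudef
  have huq : u < q := Nat.mod_lt _ (by omega)
  have hjr : j ≤ r := by
    by_contra hcon
    push_neg at hcon
    have h1 : q*(r+1) ≤ q*j := Nat.mul_le_mul_left q hcon
    have h2 : q*(r+1) = r*q + q := by ring
    omega
  -- ℤ versions
  have htZ : (t:ℤ) = (j:ℤ)*q + u := by push_cast [← hju]; ring
  have hu0Z : (0:ℤ) ≤ u := by positivity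
  have huqZ : (u:ℤ) < q := by exact_mod_cast huq
  have hu1Z : (u:ℤ) ≤ (q:ℤ) - 1 := by linarith
  have hjZ : (0:ℤ) ≤ (j:ℤ) := by positivity
  have hjrZ : (j:ℤ) ≤ (r:ℤ) := by exact_mod_cast hjr
  have htaZ : (t:ℤ) ≤ (a:ℤ) - 1 := by
    have : (t:ℤ) < a := by exact_mod_cast hta
    linarith
  rcases le_or_gt p j with hpj | hjp
  · -- case p ≤ j : witnesses (0, j-p+l)
    refine partB_s12 a b c q s p t G n (by omega) (by omega) (by omega) hcz hn hdvd
      (fun _ => 0) (fun l => j - p + l) ?_ ?_ ?_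
    · intro l hl
      have h1 : j - p + l ≤ j := by omega
      have h2 : q*(j-p+l) ≤ q*j := Nat.mul_le_mul_left q h1
      omega
    · intro l hl
      have hcast : ((j - p + l : ℕ):ℤ) = (j:ℤ) - p + l := by omega
      have h1 : ((j:ℤ)-p) ≤ ((j:ℤ) - p + l) := by
        have : (0:ℤ) ≤ l := by positivity
        linarith
      have h2 : ((j:ℤ)-p)*((s:ℤ)*a) ≤ ((j:ℤ)-p+l)*((s:ℤ)*a) :=
        mul_le_mul_of_nonneg_right h1 hsa0
      have hpjZ : (p:ℤ) ≤ j := by exact_mod_cast hpj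
      rcases hGcase with ⟨hcase, hGeq⟩ | ⟨hcase, hGeq⟩
      · have hB := B1c1 (a:ℤ) b c q s r e p hbZ hqZ hsZ hrZ hpZ hprZ he1Z he2Z haeZ
          hcz hcs (t:ℤ) j u htZ hu0Z hu1Z hjZ hjrZ htaZ hcase hpjZ
        rw [hGeq, hcast]
        push_cast
        linarith
      · have hB := B1c2 (a:ℤ) b c q s r e p hbZ hqZ hsZ hrZ hpZ hprZ he1Z he2Z haeZ
          hcz hcs (t:ℤ) j u htZ hu0Z hu1Z hjZ hjrZ htaZ hcase hpjZ
        rw [hGeq, hcast]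
        push_cast
        linarith
    · intro l1 l2 h1 h2
      omega
  · -- case j < p : witnesses (0, l) for l ≤ j and (1, j1-p+l) for l > j
    set j1 := if u + e < q then j + r else j + r + 1 with hj1def
    have hj1low : j + r ≤ j1 := by rw [hj1def]; split <;> omega
    have hj1p : p ≤ j1 := by omega
    have hqr : q*r = r*q := mul_comm _ _
    have hj1q : q*j1 ≤ t + a := by
      rw [hj1def]
      split
      · have h1 : q*(j+r) = q*j + q*r := by ring
        omega
      · have h1 : q*(j+r+1) = q*j + q*r + q := by ring
        omega
    have hjpZ : (j:ℤ) ≤ (p:ℤ) - 1 := by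
      have : (j:ℤ) < p := by exact_mod_cast hjp
      linarith
    refine partB_s12 a b c q s p t G n (by omega) (by omega) (by omega) hcz hn hdvd
      (fun l => if l ≤ j then 0 else 1) (fun l => if l ≤ j then l else j1 - p + l) ?_ ?_ ?_
    · intro l hl
      by_cases hlj : l ≤ j
      · simp only [if_pos hlj]
        have h2 : q*l ≤ q*j := Nat.mul_le_mul_left q hlj
        omega
      · simp only [if_neg hlj]
        have h1 : j1 - p + l ≤ j1 := by omega
        have h2 : q*(j1-p+l) ≤ q*j1 := Nat.mul_le_mul_left q h1
        omega
    · intro l hl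
      by_cases hlj : l ≤ j
      · simp only [if_pos hlj]
        have h0 : (0:ℤ) ≤ (l:ℤ)*((s:ℤ)*a) := by positivity
        rcases hGcase with ⟨hcase, hGeq⟩ | ⟨hcase, hGeq⟩
        · have hB := B2c1 (a:ℤ) b c q s r e p hbZ hqZ hsZ hrZ hpZ hprZ he1Z he2Z haeZ
            hcz hcs (t:ℤ) j u htZ hu0Z hu1Z hjZ hjrZ htaZ hcase hjpZ
          rw [hGeq]
          push_cast
          linarith
        · have hB := B2c2 (a:ℤ) b c q s r e p hbZ hqZ hsZ hrZ hpZ hprZ he1Z he2Z haeZ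
            hcz hcs (t:ℤ) j u htZ hu0Z hu1Z hjZ hjrZ htaZ hcase hjpZ
          rw [hGeq]
          push_cast
          linarith
      · simp only [if_neg hlj]
        rcases lt_or_ge (u + e) q with hue | hue
        · have hj1N : j1 = j + r := by rw [hj1def, if_pos hue]
          have hcast : ((j1 - p + l : ℕ):ℤ) = (j:ℤ) + r - p + l := by omega
          have hz0 : ((j:ℤ) + r - p + j + 1) ≤ ((j:ℤ) + r - p + l) := by
            have h3 : j + 1 ≤ l := by omega
            have h4 : ((j:ℤ) + 1) ≤ l := by exact_mod_cast h3
            linarith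
          have h2 : ((j:ℤ)+r-p+j+1)*((s:ℤ)*a) ≤ ((j:ℤ)+r-p+l)*((s:ℤ)*a) :=
            mul_le_mul_of_nonneg_right hz0 hsa0
          have hueZ : (u:ℤ) + e ≤ (q:ℤ) - 1 := by
            have : (u:ℤ) + e < q := by exact_mod_cast hue
            linarith
          rcases hGcase with ⟨hcase, hGeq⟩ | ⟨hcase, hGeq⟩
          · have hB := B3c1t0 (a:ℤ) b c q s r e p hbZ hqZ hsZ hrZ hpZ hprZ he1Z he2Z haeZ
              hcz hcs (t:ℤ) j u htZ hu0Z hu1Z hjZ hjrZ htaZ hcase hjpZ hueZ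
            rw [hGeq, hcast]
            push_cast
            linarith
          · have hB := B3c2t0 (a:ℤ) b c q s r e p hbZ hqZ hsZ hrZ hpZ hprZ he1Z he2Z haeZ
              hcz hcs (t:ℤ) j u htZ hu0Z hu1Z hjZ hjrZ htaZ hcase hjpZ hueZ
            rw [hGeq, hcast]
            push_cast
            linarith
        · have hj1N : j1 = j + r + 1 := by rw [hj1def, if_neg (by omega)]
          have hcast : ((j1 - p + l : ℕ):ℤ) = (j:ℤ) + r + 1 - p + l := by omega
          have hz0 : ((j:ℤ) + r + 1 - p + j + 1) ≤ ((j:ℤ) + r + 1 - p + l) := by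
            have h3 : j + 1 ≤ l := by omega
            have h4 : ((j:ℤ) + 1) ≤ l := by exact_mod_cast h3
            linarith
          have h2 : ((j:ℤ)+r+1-p+j+1)*((s:ℤ)*a) ≤ ((j:ℤ)+r+1-p+l)*((s:ℤ)*a) :=
            mul_le_mul_of_nonneg_right hz0 hsa0
          have hueZ : (q:ℤ) ≤ (u:ℤ) + e := by exact_mod_cast hue
          rcases hGcase with ⟨hcase, hGeq⟩ | ⟨hcase, hGeq⟩
          · have hB := B3c1t1 (a:ℤ) b c q s r e p hbZ hqZ hsZ hrZ hpZ hprZ he1Z he2Z haeZ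
              hcz hcs (t:ℤ) j u htZ hu0Z hu1Z hjZ hjrZ htaZ hcase hjpZ hueZ
            rw [hGeq, hcast]
            push_cast
            linarith
          · have hB := B3c2t1 (a:ℤ) b c q s r e p hbZ hqZ hsZ hrZ hpZ hprZ he1Z he2Z haeZ
              hcz hcs (t:ℤ) j u htZ hu0Z hu1Z hjZ hjrZ htaZ hcase hjpZ hueZ
            rw [hGeq, hcast]
            push_cast
            linarith
    · intro l1 l2 h1 h2
      by_cases ha1 : l1 ≤ j <;> by_cases ha2 : l2 ≤ j <;> simp [ha1, ha2] <;> omega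

end AuxPFrob

theorem stmt12 (i k p : ℕ) (hi : 3 ≤ i) (hk : 3 ≤ k)
    (hr : p ≤ (Nat.fib i - 1) / Nat.fib k)
    (hnz : ¬((Nat.fib i - 1) / Nat.fib k = 0 ∧ p = 0)) :
    letI F := Nat.fib
    letI r := (F i - 1) / F k
    IsPFrob p (F i) (F (i + 2)) (F (i + k))
      (if (F (k - 2) : ℤ) * F i ≤ ((F i : ℤ) - r * F k) * F (i + 2) then
        ((F i : ℤ) - r * F k - 1) * F (i + 2) + ((r : ℤ) + p) * F (i + k) - F i
      else
        ((F k : ℤ) - 1) * F (i + 2) + ((r : ℤ) + p - 1) * F (i + k) - F i) := by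

  obtain ⟨k', rfl⟩ : ∃ k', k = k' + 3 := ⟨k - 3, by omega⟩
  have hk2 : k' + 3 - 2 = k' + 1 := by omega
  rw [hk2] at *
  set a := Nat.fib i with hadef
  set b := Nat.fib (i+2) with hbdef
  set c := Nat.fib (i + (k'+3)) with hcdef
  set q := Nat.fib (k'+3) with hqdef
  set s := Nat.fib (k'+1) with hsdef
  set r := (a - 1) / q with hrdef
  -- basic positivity
  have h2a : 2 ≤ a := by
    calc 2 = Nat.fib 3 := rfl
    _ ≤ a := Nat.fib_mono hi
  have hq2 : 2 ≤ q := by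
    calc 2 = Nat.fib 3 := rfl
    _ ≤ q := Nat.fib_mono (by omega)
  have hs1 : 1 ≤ s := by
    calc 1 = Nat.fib 1 := rfl
    _ ≤ s := Nat.fib_mono (by omega)
  have hb1 : 1 ≤ b := by
    calc 1 = Nat.fib 1 := rfl
    _ ≤ b := Nat.fib_mono (by omega)
  have hc1 : 1 ≤ c := by
    calc 1 = Nat.fib 1 := rfl
    _ ≤ c := Nat.fib_mono (by omega)
  -- Fibonacci identities
  have hfib_id : c = a * Nat.fib (k'+2) + Nat.fib (i+1) * q := by
    rw [hcdef, show i + (k'+3) = i + (k'+2) + 1 from by omega, Nat.fib_add]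
  have hq_split : q = s + Nat.fib (k'+2) := Nat.fib_add_two
  have hb_split : b = a + Nat.fib (i+1) := Nat.fib_add_two
  have hcz : (c:ℤ) = q*b - s*a := by
    have h1 : (c:ℤ) = a*(Nat.fib (k'+2):ℤ) + (Nat.fib (i+1):ℤ)*q := by exact_mod_cast hfib_id
    have h2 : (q:ℤ) = s + (Nat.fib (k'+2):ℤ) := by exact_mod_cast hq_split
    have h3 : (b:ℤ) = a + (Nat.fib (i+1):ℤ) := by exact_mod_cast hb_split
    rw [h1, h2, h3]; ring
  have hcsN : s*a ≤ c := by
    have h1 : s ≤ Nat.fib (k'+2) := Nat.fib_mono (by omega)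
    calc s*a ≤ Nat.fib (k'+2) * a := Nat.mul_le_mul_right _ h1
    _ = a * Nat.fib (k'+2) := Nat.mul_comm _ _
    _ ≤ c := by omega
  have hcs : (s:ℤ)*a ≤ c := by exact_mod_cast hcsN
  have hcop : Nat.Coprime a b := by
    rw [hb_split, add_comm]
    exact (Nat.coprime_add_self_right).mpr (Nat.fib_coprime_fib_succ i)
  -- division facts
  have hr1 : 1 ≤ r := by omega
  have hpr : p ≤ r := hr
  have hdm : q*r + (a-1) % q = a - 1 := by rw [hrdef]; exact Nat.div_add_mod _ _
  have hmod : (a-1) % q < q := Nat.mod_lt _ (by omega)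
  have hrqle : r*q ≤ a - 1 := by rw [mul_comm]; omega
  have hrqgt : a - 1 < r*q + q := by rw [mul_comm]; omega
  set e := a - r*q with hedef
  have he1 : 1 ≤ e := by omega
  have he2 : e ≤ q := by omega
  have he : a = r*q + e := by omega
  have heZ : ((e:ℕ):ℤ) = (a:ℤ) - (r:ℤ)*q := by push_cast [he]; ring
  split_ifs with hif
  · -- case 1
    have hifE : (s:ℤ)*a ≤ (e:ℤ)*b := by rw [heZ]; exact hif
    have hg : ((a:ℤ) - r*q - 1)*b + ((r:ℤ)+p)*c - a
        = (((a:ℤ) + p*q - 1)*b - ((r:ℤ)+p)*((s:ℤ)*a)) - a := by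
      rw [hcz]; ring
    rw [hg]
    constructor
    · simp only [Set.mem_setOf_eq]
      exact partA_all a b c q s r e p _ h2a hb1 (by omega) hs1 hr1 hpr he1 he2 he hcz hcs hcop
        (Or.inl ⟨hifE, rfl⟩)
    · intro n hn
      simp only [Set.mem_setOf_eq] at hn
      by_contra hcon
      push_neg at hcon
      have hlb := partB_all a b c q s r e p _ n h2a hb1 hc1 (by omega) hs1 hr1 hpr he1 he2 he
        hcz hcs hcop (Or.inl ⟨hifE, rfl⟩) (by linarith)
      omega
  · -- case 2
    have hifE : (e:ℤ)*b ≤ (s:ℤ)*a := by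
      rw [heZ]
      push_neg at hif
      linarith
    have hg : ((q:ℤ) - 1)*b + ((r:ℤ)+p-1)*c - a
        = ((((r:ℤ)+p)*q - 1)*b - ((r:ℤ)+p-1)*((s:ℤ)*a)) - a := by
      rw [hcz]; ring
    rw [hg]
    constructor
    · simp only [Set.mem_setOf_eq]
      exact partA_all a b c q s r e p _ h2a hb1 (by omega) hs1 hr1 hpr he1 he2 he hcz hcs hcop
        (Or.inr ⟨hifE, rfl⟩)
    · intro n hn
      simp only [Set.mem_setOf_eq] at hn
      by_contra hcon
      push_neg at hcon
      have hlb := partB_all a b c q s r e p _ n h2a hb1 hc1 (by omega) hs1 hr1 hpr he1 he2 he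
        hcz hcs hcop (Or.inr ⟨hifE, rfl⟩) (by linarith)
      omega
end

section
/- Let i, k ≥ 3 with r = ⌊(F_i − 1)/F_k⌋ ≥ 1. Then n_1(F_i, F_{i+2}, F_{i+k}) = ((F_i + 2·F_k − 1)·F_{i+2} − F_i + 1)/2 − (r·F_i − ((r−1)(r+2)/2)·F_k)·F_{k−2}. -/
open Finset

theorem sum_range_add_div {K : ℕ} (hK : 0 < K) (N : ℕ) : ∑ t ∈ range K, (N + t) / K = N := by
  induction N with
  | zero => exact sum_eq_zero fun t ht => Nat.div_eq_of_lt (by simpa using mem_range.1 ht)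
  | succ N ih =>
    have h := sum_range_succ (fun t => (N + t) / K) K
    rw [sum_range_succ', ih, Nat.add_div_right N hK] at h
    simp only [Nat.add_zero] at h
    have : ∑ t ∈ range K, (N + 1 + t) / K = ∑ t ∈ range K, (N + (t + 1)) / K :=
      sum_congr rfl fun t _ => by rw [Nat.add_assoc, Nat.add_comm 1 t]
    omega

theorem sum_range_add_div_self {K : ℕ} (hK : 0 < K) (N : ℕ) :
    ∑ t ∈ range (N + K), t / K = ∑ t ∈ range N, t / K + N := by
  rw [sum_range_add, sum_range_add_div hK]

theorem sum_range_mul_add_div {K s : ℕ} (hK : 0 < K) (hs : s ≤ K) (r : ℕ) :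
    ∑ t ∈ range (r * K + s), t / K = K * r.choose 2 + r * s := by
  induction r with
  | zero =>
    simpa using sum_eq_zero fun t ht => Nat.div_eq_of_lt ((mem_range.1 ht).trans_le hs)
  | succ r ih =>
    rw [show (r + 1) * K + s = r * K + s + K by ring, sum_range_add_div_self hK, ih,
      Nat.choose_succ_succ', Nat.choose_one_right]
    ring

theorem le_div_add_one_mul {a K : ℕ} (hK : 0 < K) : a ≤ ((a - 1) / K + 1) * K := by
  have := Nat.lt_div_mul_add (a := a - 1) hK
  rw [add_mul, one_mul]
  omega

theorem div_add_mul_le {a K : ℕ} (hK : 0 < K) (s m : ℕ) :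
    (s + m * a) / K ≤ s / K + m * ((a - 1) / K + 1) := by
  have ha : a ≤ ((a - 1) / K + 1) * K := le_div_add_one_mul hK
  calc (s + m * a) / K ≤ (s + m * ((a - 1) / K + 1) * K) / K :=
        Nat.div_le_div_right (by rw [mul_assoc]; gcongr)
    _ = s / K + m * ((a - 1) / K + 1) := Nat.add_mul_div_right _ _ hK

theorem image_mod_eq_range {a : ℕ} (ha : 0 < a) {M : ℕ → ℕ}
    (hM : Set.InjOn (fun t => M t % a) (range a)) : (range a).image (fun t => M t % a) = range a :=
  eq_of_subset_of_card_le (fun _ h => by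
    obtain ⟨t, -, rfl⟩ := mem_image.1 h
    exact mem_range.2 (Nat.mod_lt _ ha))
    (card_image_of_injOn hM).ge

theorem card_setOf_modEq_lt {a : ℕ} (ha : 0 < a) {M : ℕ → ℕ}
    (hM : Set.InjOn (fun t => M t % a) (range a)) :
    a * Nat.card {n : ℕ | ∃ t < a, n ≡ M t [MOD a] ∧ n < M t} + ∑ t ∈ range a, t =
      ∑ t ∈ range a, M t := by
  have hset : {n : ℕ | ∃ t < a, n ≡ M t [MOD a] ∧ n < M t} =
      ↑((range a).biUnion fun t => {n ∈ range (M t) | n ≡ M t [MOD a]}) := by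
    ext n
    simp only [Set.mem_ofPred_eq, coe_biUnion, coe_filter, mem_coe, mem_range, Set.mem_iUnion,
      exists_prop]
    exact exists_congr fun t => and_congr_right fun _ => and_comm
  have hblock (t : ℕ) : #{n ∈ range (M t) | n ≡ M t [MOD a]} = M t / a := by
    rw [← Nat.count_eq_card_filter_range, Nat.count_modEq_card _ ha, if_neg (lt_irrefl _),
      Nat.add_zero]
  have hdisj : (range a : Set ℕ).PairwiseDisjoint fun t => {n ∈ range (M t) | n ≡ M t [MOD a]} := by
    intro t ht t' ht' hne
    refine disjoint_left.2 fun n hn hn' => hne (hM ht ht' ?_)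
    exact (mem_filter.1 hn).2.symm.trans (mem_filter.1 hn').2
  have hcard : Nat.card {n : ℕ | ∃ t < a, n ≡ M t [MOD a] ∧ n < M t} = ∑ t ∈ range a, M t / a := by
    rw [hset, Nat.card_coe_set_eq, Set.ncard_coe_finset, card_biUnion hdisj]
    exact sum_congr rfl fun t _ => hblock t
  have hres : ∑ t ∈ range a, M t % a = ∑ t ∈ range a, t := by
    have h := sum_image (f := fun x => x) hM
    rwa [image_mod_eq_range ha hM, eq_comm] at h
  rw [hcard, mul_sum, ← hres, ← sum_add_distrib]
  exact sum_congr rfl fun t _ => Nat.div_add_mod (M t) a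

def pairVal (b c : ℕ) (p : ℕ × ℕ) : ℕ := p.1 * b + p.2 * c

def minPair (K t : ℕ) : ℕ × ℕ := (t % K, t / K)

-- For `K ≤ t`, trade one `c` of `minPair` for `K` more `b`s; for `t < K`, `minPair = (t, 0)` is
-- the only pair with `x + y * K = t`, and the next one lies on the level `x + y * K = t + a`.
def nextPair (a K t : ℕ) : ℕ × ℕ :=
  if K ≤ t then (t % K + K, t / K - 1) else ((t + a) % K, (t + a) / K)

def threshold (a b c K t : ℕ) : ℕ := pairVal b c (nextPair a K t)

section

variable {a b c K e : ℕ}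

theorem minPair_add (K t : ℕ) : (minPair K t).1 + (minPair K t).2 * K = t + 0 * a := by
  simp [minPair, Nat.mod_add_div']

theorem nextPair_snd_add_one (hK : 0 < K) {t : ℕ} (hKt : K ≤ t) :
    (nextPair a K t).2 + 1 = t / K := by
  have := (Nat.one_le_div_iff hK).2 hKt
  simp only [nextPair, if_pos hKt]
  omega

theorem nextPair_add (hK : 0 < K) (t : ℕ) :
    (nextPair a K t).1 + (nextPair a K t).2 * K = t + (if K ≤ t then 0 else 1) * a := by
  by_cases hKt : K ≤ t
  · have h := Nat.mod_add_div' t K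
    rw [← nextPair_snd_add_one (a := a) hK hKt, add_mul, one_mul] at h
    simp only [nextPair, if_pos hKt] at h ⊢
    omega
  · simp only [nextPair, if_neg hKt]
    have := Nat.mod_add_div' (t + a) K
    omega

theorem minPair_ne_nextPair (hK : 0 < K) (ha : 0 < a) (t : ℕ) : minPair K t ≠ nextPair a K t := by
  intro h
  by_cases hKt : K ≤ t
  · have := nextPair_snd_add_one (a := a) hK hKt
    rw [← h, minPair] at this
    omega
  · have := Nat.mod_add_div (t + a) K
    simp only [minPair, nextPair, if_neg hKt, Prod.ext_iff] at h
    rw [← h.1, ← h.2, Nat.div_eq_of_lt (by omega), Nat.mod_eq_of_lt (by omega)] at this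
    omega

theorem snd_lt_div_of_ne_minPair (hK : 0 < K) {t : ℕ} {p : ℕ × ℕ} (hp : p.1 + p.2 * K = t)
    (hne : p ≠ minPair K t) : p.2 < t / K := by
  refine lt_of_le_of_ne ((Nat.le_div_iff_mul_le hK).2 (by omega)) fun h => hne ?_
  have := Nat.mod_add_div' t K
  rw [← h] at this
  simp only [minPair, ← h, Prod.ext_iff, and_true]
  omega

theorem pairVal_eq (hrel : K * b = e * a + c) (p : ℕ × ℕ) :
    (pairVal b c p : ℤ) = ((p.1 : ℤ) + p.2 * K) * b - p.2 * e * a := by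
  have h : (K : ℤ) * b = e * a + c := by exact_mod_cast hrel
  simp only [pairVal]
  push_cast
  linear_combination -(p.2 : ℤ) * h

theorem pairVal_eq_of_add (hrel : K * b = e * a + c) {p : ℕ × ℕ} {t m : ℕ}
    (hp : p.1 + p.2 * K = t + m * a) :
    (pairVal b c p : ℤ) = ((t : ℤ) + m * a) * b - p.2 * e * a := by
  rw [pairVal_eq hrel]
  congr 2
  exact_mod_cast hp

theorem pairVal_modEq (hrel : K * b = e * a + c) (p : ℕ × ℕ) :
    pairVal b c p ≡ (p.1 + p.2 * K) * b [MOD a] := by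
  have h : (p.1 + p.2 * K) * b = pairVal b c p + p.2 * e * a := by
    calc (p.1 + p.2 * K) * b = p.1 * b + p.2 * (K * b) := by ring
      _ = _ := by rw [hrel, pairVal]; ring
  rw [h]
  exact (Nat.add_mul_mod_self_right _ _ _).symm

theorem threshold_modEq (hK : 0 < K) (hrel : K * b = e * a + c) (t : ℕ) :
    threshold a b c K t ≡ t * b [MOD a] :=
  (pairVal_modEq hrel _).trans <| by
    rw [nextPair_add hK]
    exact Nat.ModEq.mul_right b (Nat.add_mul_mod_self_right _ _ _)

theorem threshold_le_pairVal (hK : 0 < K) (hrel : K * b = e * a + c)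
    (hb : ((a - 1) / K + 2) * e < b) {t m : ℕ} {p : ℕ × ℕ}
    (hp : p.1 + p.2 * K = t + m * a) (hne : p ≠ minPair K t) :
    threshold a b c K t ≤ pairVal b c p := by
  set r := (a - 1) / K
  set y' := (nextPair a K t).2
  set m' := if K ≤ t then 0 else 1
  have hbZ : ((r : ℤ) + 2) * e ≤ b := by exact_mod_cast hb.le
  have hp2 : p.2 ≤ (t + m * a) / K := (Nat.le_div_iff_mul_le hK).2 (by omega)
  suffices key : ((p.2 : ℤ) - y') * e ≤ ((m : ℤ) - m') * b by
    have := mul_le_mul_of_nonneg_right key (Nat.cast_nonneg (α := ℤ) a)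
    have hthr : (threshold a b c K t : ℤ) = ((t : ℤ) + m' * a) * b - y' * e * a :=
      pairVal_eq_of_add hrel (nextPair_add hK t)
    rw [← Nat.cast_le (α := ℤ), hthr, pairVal_eq_of_add hrel hp]
    linarith
  rcases m with _ | m
  · have hq : p.2 + 1 ≤ t / K := snd_lt_div_of_ne_minPair hK (by simpa using hp) hne
    have hKt : K ≤ t := (Nat.one_le_div_iff hK).1 (by omega)
    have hy' : (y' : ℤ) + 1 = (t / K : ℕ) := by exact_mod_cast nextPair_snd_add_one hK hKt
    have : (p.2 : ℤ) + 1 ≤ (t / K : ℕ) := by exact_mod_cast hq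
    simp only [m', if_pos hKt]
    push_cast
    nlinarith
  · by_cases hKt : K ≤ t
    · have hy' : (y' : ℤ) + 1 = (t / K : ℕ) := by exact_mod_cast nextPair_snd_add_one hK hKt
      have : p.2 ≤ t / K + (m + 1) * (r + 1) := hp2.trans (div_add_mul_le hK t (m + 1))
      have : (p.2 : ℤ) ≤ (t / K : ℕ) + (m + 1) * (r + 1) := by exact_mod_cast this
      simp only [m', if_pos hKt]
      push_cast
      nlinarith
    · have hy' : y' = (t + a) / K := by simp only [y', nextPair, if_neg hKt]
      have : p.2 ≤ (t + a) / K + m * (r + 1) :=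
        hp2.trans (le_of_eq_of_le (by ring_nf) (div_add_mul_le hK (t + a) m))
      have : (p.2 : ℤ) ≤ y' + m * (r + 1) := by rw [hy']; exact_mod_cast this
      simp only [m', if_neg hKt]
      push_cast
      nlinarith

theorem pairVal_minPair_le_threshold (hK : 0 < K) (hrel : K * b = e * a + c)
    (hb : ((a - 1) / K + 2) * e < b) (t : ℕ) :
    pairVal b c (minPair K t) ≤ threshold a b c K t := by
  rw [← Nat.cast_le (α := ℤ), threshold, pairVal_eq_of_add hrel (minPair_add (a := a) K t),
    pairVal_eq_of_add hrel (nextPair_add hK t)]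
  by_cases hKt : K ≤ t
  · have hy' : ((nextPair a K t).2 : ℤ) + 1 = (t / K : ℕ) := by
      exact_mod_cast nextPair_snd_add_one hK hKt
    simp only [minPair, if_pos hKt]
    push_cast at hy' ⊢
    rw [← hy']
    nlinarith [mul_nonneg (Nat.cast_nonneg (α := ℤ) e) (Nat.cast_nonneg (α := ℤ) a)]
  · have hy : (t + a) / K ≤ (a - 1) / K + 1 := by
      simpa [Nat.div_eq_of_lt (not_le.1 hKt)] using div_add_mul_le hK t 1
    have : ((t + a) / K : ℕ) * (e : ℤ) ≤ b := by
      exact_mod_cast (Nat.mul_le_mul_right e hy).trans (by nlinarith)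
    simp only [minPair, nextPair, if_neg hKt, Nat.div_eq_of_lt (not_le.1 hKt)]
    push_cast at this ⊢
    nlinarith

theorem repCount_natCast (a b c n : ℕ) :
    repCount a b c n = Nat.card {v : ℕ × (ℕ × ℕ) // v.1 * a + pairVal b c v.2 = n} :=
  Nat.card_congr <| Equiv.subtypeEquivRight fun v => by
    simp only [pairVal, ← add_assoc]
    norm_cast

theorem finite_reps (ha : 0 < a) (hb : 0 < b) (hc : 0 < c) (n : ℕ) :
    Finite {v : ℕ × (ℕ × ℕ) // v.1 * a + pairVal b c v.2 = n} := by
  refine ((Set.finite_Iic (n, n, n)).subset ?_).to_subtype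
  rintro ⟨z, x, y⟩ (hv : z * a + (x * b + y * c) = n)
  simp only [Set.mem_Iic, Prod.mk_le_mk]
  refine ⟨?_, ?_, ?_⟩ <;> nlinarith

theorem exists_add_mul_of_rep (hco : a.Coprime b) (hrel : K * b = e * a + c) {n t z : ℕ}
    {p : ℕ × ℕ} (ht : t < a) (hn : n ≡ t * b [MOD a]) (h : z * a + pairVal b c p = n) :
    ∃ m, p.1 + p.2 * K = t + m * a := by
  have hval : pairVal b c p ≡ n [MOD a] := by
    rw [← h, Nat.ModEq, Nat.mul_add_mod_self_right]
  have hmod : p.1 + p.2 * K ≡ t [MOD a] :=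
    Nat.ModEq.cancel_right_of_coprime hco ((pairVal_modEq hrel p).symm.trans (hval.trans hn))
  have := Nat.mod_add_div' (p.1 + p.2 * K) a
  rw [hmod, Nat.mod_eq_of_lt ht] at this
  exact ⟨_, this.symm⟩

theorem exists_rep_of_pairVal_le (hrel : K * b = e * a + c) {n t m : ℕ} {p : ℕ × ℕ}
    (hn : n ≡ t * b [MOD a]) (hp : p.1 + p.2 * K = t + m * a) (hle : pairVal b c p ≤ n) :
    ∃ z, z * a + pairVal b c p = n := by
  have hval : pairVal b c p ≡ n [MOD a] := (pairVal_modEq hrel p).trans <| by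
    rw [hp]
    exact (Nat.ModEq.mul_right b (Nat.add_mul_mod_self_right _ _ _)).trans hn.symm
  obtain ⟨z, hz⟩ := (Nat.modEq_iff_dvd' hle).1 hval
  exact ⟨z, by rw [mul_comm]; omega⟩

theorem repCount_le_one_iff (hK : 0 < K) (ha : 0 < a) (hco : a.Coprime b)
    (hrel : K * b = e * a + c) (hb : ((a - 1) / K + 2) * e < b) {n t : ℕ} (ht : t < a)
    (hn : n ≡ t * b [MOD a]) : repCount a b c n ≤ 1 ↔ n < threshold a b c K t := by
  have hc : 0 < c := by
    have := le_div_add_one_mul (a := a) hK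
    nlinarith
  have := finite_reps ha (Nat.zero_lt_of_lt hb) hc n
  rw [repCount_natCast, Finite.card_le_one_iff_subsingleton]
  constructor
  · intro hsub
    by_contra! hle
    obtain ⟨z₁, hz₁⟩ := exists_rep_of_pairVal_le hrel hn (minPair_add K t)
      ((pairVal_minPair_le_threshold hK hrel hb t).trans hle)
    obtain ⟨z₂, hz₂⟩ := exists_rep_of_pairVal_le hrel hn (nextPair_add hK t) hle
    exact minPair_ne_nextPair hK ha t
      (congrArg (·.1.2) (hsub.elim ⟨(z₁, _), hz₁⟩ ⟨(z₂, _), hz₂⟩))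
  · intro hlt
    have hmin (v : {v : ℕ × (ℕ × ℕ) // v.1 * a + pairVal b c v.2 = n}) : v.1.2 = minPair K t := by
      obtain ⟨m, hm⟩ := exists_add_mul_of_rep hco hrel ht hn v.2
      by_contra hne
      have := threshold_le_pairVal hK hrel hb hm hne
      have := v.2
      omega
    refine ⟨fun v w => Subtype.ext (Prod.ext ?_ ((hmin v).trans (hmin w).symm))⟩
    have hv := v.2
    have hw := w.2
    rw [hmin] at hv hw
    exact Nat.eq_of_mul_eq_mul_right ha (by omega)

theorem injOn_threshold_mod (hK : 0 < K) (hco : a.Coprime b) (hrel : K * b = e * a + c) :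
    Set.InjOn (fun t => threshold a b c K t % a) (range a) := fun t ht t' ht' h =>
  (Nat.ModEq.cancel_right_of_coprime hco
    ((threshold_modEq hK hrel t).symm.trans (Nat.ModEq.trans h (threshold_modEq hK hrel t'))))
    |>.eq_of_lt_of_lt (mem_range.1 ht) (mem_range.1 ht')

theorem setOf_repCount_le_one_eq (hK : 0 < K) (ha : 0 < a) (hco : a.Coprime b)
    (hrel : K * b = e * a + c) (hb : ((a - 1) / K + 2) * e < b) :
    {n : ℕ | repCount a b c n ≤ 1} =
      {n | ∃ t < a, n ≡ threshold a b c K t [MOD a] ∧ n < threshold a b c K t} := by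
  ext n
  constructor
  · intro h
    have hinj := injOn_threshold_mod hK hco hrel
    obtain ⟨t, ht, htn⟩ := mem_image.1 <|
      (image_mod_eq_range ha hinj).symm ▸ mem_range.2 (Nat.mod_lt n ha)
    have hn : n ≡ threshold a b c K t [MOD a] := htn.symm
    exact ⟨t, mem_range.1 ht, hn, (repCount_le_one_iff hK ha hco hrel hb (mem_range.1 ht)
      (hn.trans (threshold_modEq hK hrel t))).1 h⟩
  · rintro ⟨t, ht, hn, hlt⟩
    exact (repCount_le_one_iff hK ha hco hrel hb ht (hn.trans (threshold_modEq hK hrel t))).2 hlt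

theorem sum_nextPair_snd (hK : 0 < K) (hKa : K ≤ a) :
    ∑ t ∈ range a, (nextPair a K t).2 = ∑ t ∈ range a, t / K + K := by
  obtain ⟨N, rfl⟩ := Nat.exists_eq_add_of_le hKa
  have hlow : ∑ t ∈ range K, (nextPair (K + N) K t).2 = K + N := by
    refine (sum_congr rfl fun t ht => ?_).trans (sum_range_add_div hK (K + N))
    rw [nextPair, if_neg (by simpa using ht), add_comm t]
  have hhigh : ∑ j ∈ range N, (nextPair (K + N) K (K + j)).2 = ∑ j ∈ range N, j / K :=
    sum_congr rfl fun j _ => by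
      rw [nextPair, if_pos (Nat.le_add_right K j), Nat.add_div_left j hK, Nat.add_sub_cancel]
  rw [sum_range_add, hlow, hhigh, add_comm K N, sum_range_add_div_self hK]
  omega

theorem sum_nextPair_add (hK : 0 < K) (hKa : K ≤ a) :
    ∑ t ∈ range a, ((nextPair a K t).1 + (nextPair a K t).2 * K) = ∑ t ∈ range a, t + K * a := by
  have hfilter : (range a).filter (fun t => ¬K ≤ t) = range K := by
    ext t
    simp only [mem_filter, mem_range, not_le]
    omega
  rw [sum_congr rfl fun t _ => nextPair_add hK t, sum_add_distrib, ← sum_mul, sum_ite,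
    sum_const_zero, zero_add, sum_const, hfilter, card_range, smul_eq_mul, mul_one]

theorem sum_threshold (hK : 0 < K) (hKa : K ≤ a) (hrel : K * b = e * a + c) :
    (∑ t ∈ range a, threshold a b c K t : ℤ) =
      ((∑ t ∈ range a, t + K * a : ℕ) : ℤ) * b - ((∑ t ∈ range a, t / K + K : ℕ) : ℤ) * e * a := by
  rw [← sum_nextPair_add hK hKa, ← sum_nextPair_snd hK hKa]
  push_cast
  simp only [threshold, pairVal_eq hrel, sum_sub_distrib, sum_mul]

theorem card_setOf_repCount_le_one (hK : 0 < K) (hKa : K ≤ a) (hco : a.Coprime b)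
    (hrel : K * b = e * a + c) (hb : ((a - 1) / K + 2) * e < b) {r : ℕ} (hr : (a - 1) / K = r) :
    (Nat.card {n : ℕ | repCount a b c n ≤ 1} : ℚ) =
      (((a : ℚ) + 2 * K - 1) * b - a + 1) / 2 - ((r : ℚ) * a - (r - 1) * (r + 2) / 2 * K) * e := by
  have ha : 0 < a := hK.trans_le hKa
  have hcount := card_setOf_modEq_lt ha (injOn_threshold_mod hK hco hrel)
  rw [← setOf_repCount_le_one_eq hK ha hco hrel hb] at hcount
  have hsum := sum_threshold hK hKa hrel
  obtain ⟨s, hsK, ha'⟩ : ∃ s ≤ K, a = r * K + s := by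
    refine ⟨(a - 1) % K + 1, Nat.mod_lt _ hK, ?_⟩
    have := Nat.div_add_mod' (a - 1) K
    rw [hr] at this
    omega
  have hG := sum_range_mul_add_div hK hsK r
  rw [← ha'] at hG
  set G := ∑ t ∈ range a, t / K
  have hgauss := congrArg (Nat.cast (R := ℚ)) (sum_range_id_mul_two a)
  have hcountQ := congrArg (Nat.cast (R := ℚ)) hcount
  have hsumQ := congrArg (Int.cast (R := ℚ)) hsum
  have hGQ := congrArg (Nat.cast (R := ℚ)) hG
  have haQ := congrArg (Nat.cast (R := ℚ)) ha'
  push_cast [Nat.cast_choose_two, Nat.cast_sub (Nat.one_le_iff_ne_zero.2 ha.ne')]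
    at hgauss hcountQ hsumQ hGQ haQ
  have haQ0 : (a : ℚ) ≠ 0 := by exact_mod_cast ha.ne'
  apply mul_left_cancel₀ haQ0
  linear_combination hcountQ + hsumQ + ((b : ℚ) - 1) / 2 * hgauss - (e * a : ℚ) * hGQ +
    (e * a * r : ℚ) * haQ

end

theorem two_mul_fib_le_fib_add_two (n : ℕ) : 2 * Nat.fib n ≤ Nat.fib (n + 2) := by
  rw [Nat.fib_add_two, two_mul]
  exact Nat.add_le_add_left (Nat.fib_mono n.le_succ) _

theorem coprime_fib_fib_add_two (n : ℕ) : (Nat.fib n).Coprime (Nat.fib (n + 2)) := by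
  rw [Nat.fib_add_two, Nat.coprime_self_add_right]
  exact Nat.fib_coprime_fib_succ n

theorem fib_mul_fib_add_two {k : ℕ} (hk : 2 ≤ k) (i : ℕ) :
    Nat.fib k * Nat.fib (i + 2) = Nat.fib (k - 2) * Nat.fib i + Nat.fib (i + k) := by
  obtain ⟨j, rfl⟩ := Nat.exists_eq_add_of_le hk
  have h := Nat.fib_add i (j + 1)
  rw [show i + (j + 1) + 1 = i + (2 + j) by ring] at h
  rw [Nat.add_sub_cancel_left, h, add_comm 2 j, Nat.fib_add_two, Nat.fib_add_two]
  ring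

theorem stmt15_general (i k : ℕ) (hk : 3 ≤ k)
    (hr : 1 ≤ (Nat.fib i - 1) / Nat.fib k) :
    letI F := Nat.fib
    letI r := (F i - 1) / F k
    (Nat.card {n : ℕ | repCount (F i) (F (i + 2)) (F (i + k)) (n : ℤ) ≤ 1} : ℚ) =
      (((F i : ℚ) + 2 * F k - 1) * F (i + 2) - F i + 1) / 2 -
        ((r : ℚ) * F i - ((r : ℚ) - 1) * ((r : ℚ) + 2) / 2 * F k) * F (k - 2) := by
  have hK : 0 < Nat.fib k := Nat.fib_pos.2 (by omega)
  have hKa : Nat.fib k ≤ Nat.fib i - 1 := (Nat.one_le_div_iff hK).1 hr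
  have hb : ((Nat.fib i - 1) / Nat.fib k + 2) * Nat.fib (k - 2) < Nat.fib (i + 2) := by
    have he := two_mul_fib_le_fib_add_two (k - 2)
    rw [Nat.sub_add_cancel (by omega : 2 ≤ k)] at he
    have ha := two_mul_fib_le_fib_add_two i
    have hrK := Nat.div_mul_le_self (Nat.fib i - 1) (Nat.fib k)
    have := Nat.mul_le_mul_left ((Nat.fib i - 1) / Nat.fib k) he
    have : Nat.fib i - 1 + 1 = Nat.fib i := by omega
    nlinarith
  exact card_setOf_repCount_le_one hK (by omega) (coprime_fib_fib_add_two i)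
    (fib_mul_fib_add_two (by omega) i) hb rfl

theorem stmt15 (i k : ℕ) (hi : 3 ≤ i) (hk : 3 ≤ k)
    (hr : 1 ≤ (Nat.fib i - 1) / Nat.fib k) :
    letI F := Nat.fib
    letI r := (F i - 1) / F k
    (Nat.card {n : ℕ | repCount (F i) (F (i + 2)) (F (i + k)) (n : ℤ) ≤ 1} : ℚ) =
      (((F i : ℚ) + 2 * F k - 1) * F (i + 2) - F i + 1) / 2 -
        ((r : ℚ) * F i - ((r : ℚ) - 1) * ((r : ℚ) + 2) / 2 * F k) * F (k - 2) :=
  stmt15_general i k hk hr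
end
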